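/- arXiv:2003.13456 — 9 statements merged into one kernel-verified Lean document; each statement's English description precedes it below -/
import Mathlib

section
/- Let f(x) = αx² + βx + γ with α > 0, and let x₁ < x₂ be real numbers. Let ℓ : ℝ → ℝ be the affine function whose graph is the chord through P = (x₁, f(x₁)) and A = (x₂, f(x₂)), and let x_C := (x₁ + x₂)/2, which is the unique point of (x₁, x₂) where f′(x_C) equals the slope of the chord; set C := (x_C, f(x_C)). Then the area enclosed between the chord and the parabola equals four thirds of the area of the triangle PAC: ∫_{x₁}^{x₂} (ℓ(x) − f(x)) dx = (4/3) · (1/2)·|det(A − P, C − P)|. -/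
/-!
On the chord from `a` to `b` the difference `ℓ - f` is `α (x - a) (b - x)`, so the parabolic
segment has area `α (b - a)³ / 6`. At the midpoint `f` falls below the chord by `α (b - a)² / 4`,
so the triangle `PAC`, with base width `b - a`, has area `α (b - a)³ / 8`; the ratio is `4 / 3`.
-/

section Quadratic

variable (α β γ : ℝ)

theorem hasDerivAt_quadratic (x : ℝ) :
    HasDerivAt (fun x => α * x ^ 2 + β * x + γ) (2 * α * x + β) x :=
  (((hasDerivAt_pow 2 x).const_mul α).add ((hasDerivAt_id x).const_mul β)).add_const γ
    |>.congr_deriv (by simp only [Nat.cast_ofNat, Nat.add_one_sub_one, pow_one, mul_one]; ring)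

theorem quadratic_chord_slope {a b : ℝ} (hab : a ≠ b) :
    let f : ℝ → ℝ := fun x => α * x ^ 2 + β * x + γ
    (f b - f a) / (b - a) = α * (a + b) + β := by
  intro f
  rw [div_eq_iff (sub_ne_zero.mpr hab.symm)]
  ring

theorem quadratic_deriv_eq_chord_slope_iff (hα : α ≠ 0) {a b : ℝ} (hab : a ≠ b)
    (x : ℝ) :
    let f : ℝ → ℝ := fun x => α * x ^ 2 + β * x + γ
    deriv f x = (f b - f a) / (b - a) ↔ x = (a + b) / 2 := by
  intro f
  rw [(hasDerivAt_quadratic α β γ x).deriv, quadratic_chord_slope α β γ hab]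
  constructor
  · intro h
    field_simp
    exact mul_left_cancel₀ hα (by linarith)
  · rintro rfl
    ring

theorem chord_sub_quadratic {a b : ℝ} (hab : a ≠ b) (x : ℝ) :
    let f : ℝ → ℝ := fun x => α * x ^ 2 + β * x + γ
    f a + (f b - f a) / (b - a) * (x - a) - f x = α * ((x - a) * (b - x)) := by
  intro f
  rw [quadratic_chord_slope α β γ hab]
  ring

theorem quadratic_midpoint_det (a b : ℝ) :
    let f : ℝ → ℝ := fun x => α * x ^ 2 + β * x + γ
    (b - a) * (f ((a + b) / 2) - f a) - ((a + b) / 2 - a) * (f b - f a) =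
      -(α * (b - a) ^ 3 / 4) := by
  intro f
  ring

end Quadratic

theorem integral_sub_mul_sub (a b : ℝ) :
    ∫ x in a..b, (x - a) * (b - x) = (b - a) ^ 3 / 6 := by
  have hderiv : ∀ x, HasDerivAt (fun x => (b - a) * (x - a) ^ 2 / 2 - (x - a) ^ 3 / 3)
      ((x - a) * (b - x)) x := fun x =>
    (((((hasDerivAt_id x).sub_const a).pow 2).const_mul (b - a)).div_const 2).sub
      ((((hasDerivAt_id x).sub_const a).pow 3).div_const 3) |>.congr_deriv
      (by simp only [id, Nat.cast_ofNat, Nat.add_one_sub_one, pow_one, mul_one]; ring)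
  rw [intervalIntegral.integral_eq_sub_of_hasDerivAt (fun x _ => hderiv x)
    (by apply Continuous.intervalIntegrable; fun_prop)]
  ring

/-- Archimedes' quadrature of the parabola, for the graph of `f x = αx² + βx + γ`:
the area between a chord and the parabola is `4/3` times the area of the triangle
`PAC`, where `C` is the (unique) point of the open interval where the tangent is
parallel to the chord, namely the midpoint abscissa `x_C = (x₁+x₂)/2`. -/
theorem archimedes_quadrature (α β γ : ℝ) (hα : 0 < α) (x₁ x₂ : ℝ) (h12 : x₁ < x₂) :
    let f : ℝ → ℝ := fun x => α * x ^ 2 + β * x + γ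
    let ℓ : ℝ → ℝ := fun x => f x₁ + (f x₂ - f x₁) / (x₂ - x₁) * (x - x₁)
    let xC : ℝ := (x₁ + x₂) / 2
    (∀ x ∈ Set.Ioo x₁ x₂, deriv f x = (f x₂ - f x₁) / (x₂ - x₁) ↔ x = xC) ∧
    (∫ x in x₁..x₂, (ℓ x - f x)) =
      (4 / 3) * ((1 / 2) *
        |(x₂ - x₁) * (f xC - f x₁) - (xC - x₁) * (f x₂ - f x₁)|) := by
  intro f ℓ xC
  refine ⟨fun x _ => quadratic_deriv_eq_chord_slope_iff α β γ hα.ne' h12.ne x, ?_⟩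
  have hsegment : ∫ x in x₁..x₂, (ℓ x - f x) = α * (x₂ - x₁) ^ 3 / 6 := by
    have hchord : (fun x => ℓ x - f x) = fun x => α * ((x - x₁) * (x₂ - x)) :=
      funext (chord_sub_quadratic α β γ h12.ne)
    rw [hchord, intervalIntegral.integral_const_mul, integral_sub_mul_sub]
    ring
  have hwidth : 0 < x₂ - x₁ := sub_pos.mpr h12
  rw [hsegment, quadratic_midpoint_det, abs_neg, abs_of_pos (by positivity)]
  ring
end

section
/- Let μ > 0 and ψ(r) := −μ/r (the Kepler potential). Let ξ < 0 and Λ > 0, and let 0 < r_P < r_A be such that 2ξ − 2ψ(r) − Λ²/r² > 0 for r ∈ (r_P, r_A) and vanishes at r_P and r_A. Then the radial period T := 2∫_{r_P}^{r_A} dr/√(2ξ − 2ψ(r) − Λ²/r²) satisfies Kepler's third law T² = (π²/2)·μ²/(−ξ)³. -/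
/-!
At the turning points the radicand vanishes, so `r_P, r_A` are the roots of
`2ξr² + 2μr − Λ²`; by Vieta the radicand is `−2ξ (r_A − r)(r − r_P) / r²` and
`r_P + r_A = −μ/ξ`. The period is then `(2/√(−2ξ)) ∫ r / √((r_A − r)(r − r_P)) dr`, and
the antiderivative `(a + b)/2 · arcsin((2r − a − b)/(b − a)) − √((b − r)(r − a))` evaluates
this integral to `π (r_P + r_A) / 2`.
-/

open Real Set intervalIntegral

section ArcsineIntegral

variable {a b : ℝ}

theorem hasDerivAt_arcsin_affine (hab : a < b) {r : ℝ} (hr : r ∈ Ioo a b) :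
    HasDerivAt (fun r => arcsin ((2 * r - a - b) / (b - a))) (1 / √((b - r) * (r - a))) r := by
  have hba : 0 < b - a := sub_pos.mpr hab
  have hu₁ : (2 * r - a - b) / (b - a) ≠ -1 := by
    rw [Ne, div_eq_iff hba.ne']; linarith [hr.1]
  have hu₂ : (2 * r - a - b) / (b - a) ≠ 1 := by
    rw [Ne, div_eq_iff hba.ne']; linarith [hr.2]
  have hlin : HasDerivAt (fun r => (2 * r - a - b) / (b - a)) (2 / (b - a)) r := by
    simpa using ((((hasDerivAt_id r).const_mul 2).sub_const a).sub_const b).div_const (b - a)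
  have hrad : 1 - ((2 * r - a - b) / (b - a)) ^ 2 = (2 / (b - a)) ^ 2 * ((b - r) * (r - a)) := by
    field_simp; ring
  refine ((hasDerivAt_arcsin hu₁ hu₂).comp r hlin).congr_deriv ?_
  rw [hrad, sqrt_mul (sq_nonneg _), sqrt_sq (by positivity)]
  field_simp

theorem intervalIntegrable_inv_sqrt_mul_sub (hab : a < b) :
    IntervalIntegrable (fun r => 1 / √((b - r) * (r - a))) MeasureTheory.volume a b := by
  refine intervalIntegrable_deriv_of_nonneg (g := fun r => arcsin ((2 * r - a - b) / (b - a)))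
    (by fun_prop) (fun r hr => ?_) (fun r _ => by positivity)
  rw [min_eq_left hab.le, max_eq_right hab.le] at hr
  exact hasDerivAt_arcsin_affine hab hr

theorem integral_div_sqrt_mul_sub (hab : a < b) :
    ∫ r in a..b, r / √((b - r) * (r - a)) = π * (a + b) / 2 := by
  have hba : 0 < b - a := sub_pos.mpr hab
  set F : ℝ → ℝ := fun r => (a + b) / 2 * arcsin ((2 * r - a - b) / (b - a)) - √((b - r) * (r - a))
  have hF : ∀ r ∈ Ioo a b, HasDerivAt F (r / √((b - r) * (r - a))) r := by
    intro r hr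
    have hQ : 0 < (b - r) * (r - a) := mul_pos (sub_pos.mpr hr.2) (sub_pos.mpr hr.1)
    have hQ' : HasDerivAt (fun r => (b - r) * (r - a)) (a + b - 2 * r) r := by
      refine (((hasDerivAt_id' r).const_sub b).mul ((hasDerivAt_id' r).sub_const a)).congr_deriv ?_
      ring
    refine (((hasDerivAt_arcsin_affine hab hr).const_mul ((a + b) / 2)).sub
      (hQ'.sqrt hQ.ne')).congr_deriv ?_
    field_simp
    ring
  have hint : IntervalIntegrable (fun r => r / √((b - r) * (r - a))) MeasureTheory.volume a b := by
    simpa only [mul_one_div, id] using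
      (intervalIntegrable_inv_sqrt_mul_sub hab).continuousOn_mul continuousOn_id
  rw [integral_eq_sub_of_hasDerivAt_of_le hab.le (by fun_prop) hF hint]
  have hb : (2 * b - a - b) / (b - a) = 1 := by rw [div_eq_one_iff_eq hba.ne']; ring
  have ha : (2 * a - a - b) / (b - a) = -1 := by rw [div_eq_iff hba.ne']; ring
  simp only [F, hb, ha, arcsin_one, arcsin_neg_one, sub_self, mul_zero, zero_mul, sqrt_zero]
  ring

end ArcsineIntegral

theorem vieta_of_ne_of_quadratic_eq_zero {K : Type*} [Field K] {c₂ c₁ c₀ x y : K} (hxy : x ≠ y)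
    (hx : c₂ * x ^ 2 + c₁ * x + c₀ = 0) (hy : c₂ * y ^ 2 + c₁ * y + c₀ = 0) :
    c₂ * (x + y) = -c₁ ∧ c₀ = c₂ * (x * y) := by
  have hsum : c₂ * (x + y) = -c₁ := by
    have h : (x - y) * (c₂ * (x + y) + c₁) = 0 := by linear_combination hx - hy
    linear_combination (mul_eq_zero.mp h).resolve_left (sub_ne_zero.mpr hxy)
  exact ⟨hsum, by linear_combination hx - x * hsum⟩

section Kepler

variable {μ ξ Λ r : ℝ}

theorem kepler_quadratic_eq_zero (hr : r ≠ 0) (h : 2 * ξ - 2 * (-μ / r) - Λ ^ 2 / r ^ 2 = 0) :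
    2 * ξ * r ^ 2 + 2 * μ * r + -Λ ^ 2 = 0 := by
  field_simp at h
  linear_combination h

theorem kepler_radicand_eq {r_P r_A : ℝ} (hsum : 2 * ξ * (r_P + r_A) = -(2 * μ))
    (hprod : -Λ ^ 2 = 2 * ξ * (r_P * r_A)) (hr : r ≠ 0) :
    2 * ξ - 2 * (-μ / r) - Λ ^ 2 / r ^ 2 = -(2 * ξ) * ((r_A - r) * (r - r_P)) / r ^ 2 := by
  field_simp
  linear_combination r * hsum + hprod

theorem one_div_sqrt_kepler_radicand {r_P r_A : ℝ} (hξ : ξ ≤ 0)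
    (hsum : 2 * ξ * (r_P + r_A) = -(2 * μ)) (hprod : -Λ ^ 2 = 2 * ξ * (r_P * r_A)) (hr : 0 < r) :
    1 / √(2 * ξ - 2 * (-μ / r) - Λ ^ 2 / r ^ 2) =
      (√(-(2 * ξ)))⁻¹ * (r / √((r_A - r) * (r - r_P))) := by
  rw [kepler_radicand_eq hsum hprod hr.ne', mul_div_assoc, sqrt_mul (by linarith),
    sqrt_div' _ (sq_nonneg r), sqrt_sq hr.le]
  field_simp

end Kepler

theorem kepler_third_law_general (μ ξ Λ r_P r_A : ℝ) (hξ : ξ < 0)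
    (hrP : 0 < r_P) (hr : r_P < r_A)
    (hP : 2 * ξ - 2 * (-μ / r_P) - Λ ^ 2 / r_P ^ 2 = 0)
    (hA : 2 * ξ - 2 * (-μ / r_A) - Λ ^ 2 / r_A ^ 2 = 0) :
    (2 * ∫ r in r_P..r_A,
        1 / Real.sqrt (2 * ξ - 2 * (-μ / r) - Λ ^ 2 / r ^ 2)) ^ 2 =
      Real.pi ^ 2 / 2 * μ ^ 2 / (-ξ) ^ 3 := by
  obtain ⟨hsum, hprod⟩ := vieta_of_ne_of_quadratic_eq_zero hr.ne
    (kepler_quadratic_eq_zero hrP.ne' hP) (kepler_quadratic_eq_zero (hrP.trans hr).ne' hA)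
  have hintegrand : EqOn (fun r => 1 / √(2 * ξ - 2 * (-μ / r) - Λ ^ 2 / r ^ 2))
      (fun r => (√(-(2 * ξ)))⁻¹ * (r / √((r_A - r) * (r - r_P)))) (uIcc r_P r_A) := fun r hr' =>
    one_div_sqrt_kepler_radicand hξ.le hsum hprod (hrP.trans_le (uIcc_of_le hr.le ▸ hr').1)
  rw [integral_congr hintegrand, integral_const_mul, integral_div_sqrt_mul_sub hr, mul_pow,
    mul_pow, inv_pow, sq_sqrt (by linarith)]
  have hξ0 : ξ ≠ 0 := hξ.ne
  field_simp
  linear_combination (μ - ξ * (r_P + r_A)) / 2 * hsum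

/-- Kepler's third law: for a bound orbit of energy `ξ < 0` and angular momentum
`Λ > 0` in the Kepler potential `ψ(r) = -μ/r`, the radial period satisfies
`T² = (π²/2)·μ²/(-ξ)³`. -/
theorem kepler_third_law (μ ξ Λ r_P r_A : ℝ) (hμ : 0 < μ) (hξ : ξ < 0) (hΛ : 0 < Λ)
    (hrP : 0 < r_P) (hr : r_P < r_A)
    (hpos : ∀ r ∈ Set.Ioo r_P r_A, 0 < 2 * ξ - 2 * (-μ / r) - Λ ^ 2 / r ^ 2)
    (hP : 2 * ξ - 2 * (-μ / r_P) - Λ ^ 2 / r_P ^ 2 = 0)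
    (hA : 2 * ξ - 2 * (-μ / r_A) - Λ ^ 2 / r_A ^ 2 = 0) :
    (2 * ∫ r in r_P..r_A,
        1 / Real.sqrt (2 * ξ - 2 * (-μ / r) - Λ ^ 2 / r ^ 2)) ^ 2 =
      Real.pi ^ 2 / 2 * μ ^ 2 / (-ξ) ^ 3 :=
  kepler_third_law_general μ ξ Λ r_P r_A hξ hrP hr hP hA
end

section
/- Let ω > 0, ε ∈ ℝ, λ ∈ ℝ, and ψ(r) := ε + λ/(2r²) + ω²r²/8 (a potential of the Harmonic family). Let ξ ∈ ℝ and Λ ∈ ℝ, and let 0 < r_P < r_A be such that 2ξ − 2ψ(r) − Λ²/r² > 0 for r ∈ (r_P, r_A) and vanishes at r_P and r_A. Then the radial period T := 2∫_{r_P}^{r_A} dr/√(2ξ − 2ψ(r) − Λ²/r²) equals 2π/ω; in particular it is independent of both ξ and Λ. -/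
/-!
Multiplied by `r²`, the radicand `2ξ − 2ψ₁(r) − Λ²/r²` is a quadratic in `r²` with leading
coefficient `−ω²/4`; since it vanishes at `r_P²` and `r_A²`, it equals
`(ω/2r)² (r_A² − r²)(r² − r_P²)`. The substitution `x = r²` then turns the period into
`(2/ω) ∫ₐᵇ dx/√((b − x)(x − a))` with `a = r_P²`, `b = r_A²`, and this arcsine integral is `π`
for every `a < b`.
-/

open Real Set

theorem integral_one_div_sqrt_one_sub_sq : ∫ x in (-1 : ℝ)..1, 1 / √(1 - x ^ 2) = π := by
  have hderiv : ∀ x ∈ Ioo (-1 : ℝ) 1, HasDerivAt arcsin (1 / √(1 - x ^ 2)) x :=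
    fun x hx => hasDerivAt_arcsin hx.1.ne' hx.2.ne
  have hint : IntervalIntegrable (fun x : ℝ => 1 / √(1 - x ^ 2)) MeasureTheory.volume (-1) 1 := by
    refine intervalIntegral.intervalIntegrable_deriv_of_nonneg continuous_arcsin.continuousOn
      ?_ fun x _ => by positivity
    simpa using hderiv
  rw [intervalIntegral.integral_eq_sub_of_hasDerivAt_of_le (by norm_num)
    continuous_arcsin.continuousOn hderiv hint, arcsin_one, arcsin_neg_one]
  ring

theorem integral_one_div_sqrt_sub_mul_sub {a b : ℝ} (hab : a < b) :
    ∫ x in a..b, 1 / √((b - x) * (x - a)) = π := by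
  set h := (b - a) / 2 with hh
  have hpos : 0 < h := by rw [hh]; linarith
  have hrescale : ∀ t : ℝ, 1 / √((b - (h * t + (a + b) / 2)) * (h * t + (a + b) / 2 - a))
      = h⁻¹ * (1 / √(1 - t ^ 2)) := by
    intro t
    have hprod : (b - (h * t + (a + b) / 2)) * (h * t + (a + b) / 2 - a)
        = h ^ 2 * (1 - t ^ 2) := by
      rw [hh]; ring
    rw [hprod, sqrt_mul (sq_nonneg h), sqrt_sq hpos.le, one_div, one_div, mul_inv]
  have hsub := intervalIntegral.integral_comp_mul_add (a := -1) (b := 1)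
    (fun x => 1 / √((b - x) * (x - a))) hpos.ne' ((a + b) / 2)
  have hlo : h * -1 + (a + b) / 2 = a := by rw [hh]; ring
  have hhi : h * 1 + (a + b) / 2 = b := by rw [hh]; ring
  simp only [hrescale, intervalIntegral.integral_const_mul, integral_one_div_sqrt_one_sub_sq,
    hlo, hhi, smul_eq_mul] at hsub
  exact (mul_left_cancel₀ (inv_ne_zero hpos.ne') hsub).symm

theorem integral_one_div_sqrt_sq_sub_mul_sq_sub_mul {p q : ℝ} (hp : 0 ≤ p) (hpq : p < q) :
    ∫ r in p..q, 1 / √((q ^ 2 - r ^ 2) * (r ^ 2 - p ^ 2)) * (2 * r) = π := by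
  have hsub := intervalIntegral.integral_comp_mul_deriv_of_deriv_nonneg
    (g := fun x => 1 / √((q ^ 2 - x) * (x - p ^ 2))) (continuous_pow 2).continuousOn
    (fun r _ => by simpa using hasDerivAt_pow 2 r) (fun r hr => by
      rw [min_eq_left hpq.le] at hr; linarith [hr.1])
  rw [Function.comp_def] at hsub
  rw [hsub]
  exact integral_one_div_sqrt_sub_mul_sub (pow_lt_pow_left₀ hpq hp two_ne_zero)

noncomputable def radialRadicand (ψ : ℝ → ℝ) (ξ Λ r : ℝ) : ℝ := 2 * ξ - 2 * ψ r - Λ ^ 2 / r ^ 2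

noncomputable def harmonicPotential (ω ε lam r : ℝ) : ℝ :=
  ε + lam / (2 * r ^ 2) + ω ^ 2 * r ^ 2 / 8

theorem quadratic_eq_mul_sub_mul_sub {c b d u v : ℝ} (huv : u ≠ v)
    (hu : c * u ^ 2 + b * u + d = 0) (hv : c * v ^ 2 + b * v + d = 0) (x : ℝ) :
    c * x ^ 2 + b * x + d = c * (x - u) * (x - v) := by
  have hb : b = -c * (u + v) := by
    have h : (u - v) * (c * (u + v) + b) = 0 := by linear_combination hu - hv
    linear_combination (mul_eq_zero.mp h).resolve_left (sub_ne_zero.mpr huv)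
  linear_combination hu + (x - u) * hb

section Harmonic

variable {ω ε lam ξ Λ : ℝ}

theorem sq_mul_radialRadicand_harmonicPotential {r : ℝ} (hr : r ≠ 0) :
    r ^ 2 * radialRadicand (harmonicPotential ω ε lam) ξ Λ r
      = -(ω ^ 2 / 4) * (r ^ 2) ^ 2 + 2 * (ξ - ε) * r ^ 2 + -(lam + Λ ^ 2) := by
  unfold radialRadicand harmonicPotential
  field_simp
  ring

theorem radialRadicand_harmonicPotential_eq {r_P r_A r : ℝ}
    (hP : radialRadicand (harmonicPotential ω ε lam) ξ Λ r_P = 0)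
    (hA : radialRadicand (harmonicPotential ω ε lam) ξ Λ r_A = 0)
    (hrP : r_P ≠ 0) (hrA : r_A ≠ 0) (hne : r_P ^ 2 ≠ r_A ^ 2) (hr : r ≠ 0) :
    radialRadicand (harmonicPotential ω ε lam) ξ Λ r
      = (ω / (2 * r)) ^ 2 * ((r_A ^ 2 - r ^ 2) * (r ^ 2 - r_P ^ 2)) := by
  have hroot : ∀ s ≠ 0, radialRadicand (harmonicPotential ω ε lam) ξ Λ s = 0 →
      -(ω ^ 2 / 4) * (s ^ 2) ^ 2 + 2 * (ξ - ε) * s ^ 2 + -(lam + Λ ^ 2) = 0 := by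
    intro s hs h
    rw [← sq_mul_radialRadicand_harmonicPotential hs, h, mul_zero]
  have hfactor := quadratic_eq_mul_sub_mul_sub hne (hroot r_P hrP hP) (hroot r_A hrA hA) (r ^ 2)
  rw [← sq_mul_radialRadicand_harmonicPotential hr] at hfactor
  field_simp
  linear_combination 4 * hfactor

theorem harmonic_family_period_general (ω ε lam ξ Λ r_P r_A : ℝ) (hω : 0 < ω)
    (hrP : 0 < r_P) (hr : r_P < r_A)
    (hP : 2 * ξ - 2 * (ε + lam / (2 * r_P ^ 2) + ω ^ 2 * r_P ^ 2 / 8)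
        - Λ ^ 2 / r_P ^ 2 = 0)
    (hA : 2 * ξ - 2 * (ε + lam / (2 * r_A ^ 2) + ω ^ 2 * r_A ^ 2 / 8)
        - Λ ^ 2 / r_A ^ 2 = 0) :
    (2 * ∫ r in r_P..r_A, 1 / Real.sqrt
        (2 * ξ - 2 * (ε + lam / (2 * r ^ 2) + ω ^ 2 * r ^ 2 / 8) - Λ ^ 2 / r ^ 2)) =
      2 * Real.pi / ω := by
  have hne : r_P ^ 2 ≠ r_A ^ 2 := (pow_lt_pow_left₀ hr hrP.le two_ne_zero).ne
  have hintegrand : EqOn (fun r => 1 / √(radialRadicand (harmonicPotential ω ε lam) ξ Λ r))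
      (fun r => ω⁻¹ * (1 / √((r_A ^ 2 - r ^ 2) * (r ^ 2 - r_P ^ 2)) * (2 * r)))
      (uIcc r_P r_A) := by
    intro r hr'
    have hr0 : 0 < r := hrP.trans_le (uIcc_of_le hr.le ▸ hr').1
    dsimp only
    rw [radialRadicand_harmonicPotential_eq hP hA hrP.ne' (hrP.trans hr).ne' hne hr0.ne',
      sqrt_mul (sq_nonneg _), sqrt_sq (by positivity)]
    field_simp
  calc 2 * ∫ r in r_P..r_A, 1 / √(radialRadicand (harmonicPotential ω ε lam) ξ Λ r)
      _ = 2 * (ω⁻¹ * π) := by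
        rw [intervalIntegral.integral_congr hintegrand, intervalIntegral.integral_const_mul,
          integral_one_div_sqrt_sq_sub_mul_sq_sub_mul hrP.le hr]
      _ = 2 * π / ω := by ring

/-- In a potential of the Harmonic family `ψ(r) = ε + λ/(2r²) + ω²r²/8`, the radial
period of any bound orbit equals `2π/ω`, independently of both `ξ` and `Λ`. -/
theorem harmonic_family_period (ω ε lam ξ Λ r_P r_A : ℝ) (hω : 0 < ω)
    (hrP : 0 < r_P) (hr : r_P < r_A)
    (hpos : ∀ r ∈ Set.Ioo r_P r_A,
      0 < 2 * ξ - 2 * (ε + lam / (2 * r ^ 2) + ω ^ 2 * r ^ 2 / 8) - Λ ^ 2 / r ^ 2)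
    (hP : 2 * ξ - 2 * (ε + lam / (2 * r_P ^ 2) + ω ^ 2 * r_P ^ 2 / 8)
        - Λ ^ 2 / r_P ^ 2 = 0)
    (hA : 2 * ξ - 2 * (ε + lam / (2 * r_A ^ 2) + ω ^ 2 * r_A ^ 2 / 8)
        - Λ ^ 2 / r_A ^ 2 = 0) :
    (2 * ∫ r in r_P..r_A, 1 / Real.sqrt
        (2 * ξ - 2 * (ε + lam / (2 * r ^ 2) + ω ^ 2 * r ^ 2 / 8) - Λ ^ 2 / r ^ 2)) =
      2 * Real.pi / ω :=
  harmonic_family_period_general ω ε lam ξ Λ r_P r_A hω hrP hr hP hA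
end Harmonic
end

section
/- Let ω > 0, ε ∈ ℝ, λ ∈ ℝ, and ψ(r) := ε + λ/(2r²) + ω²r²/8 (a potential of the Harmonic family). Let ξ ∈ ℝ and Λ > 0 with Λ² + λ > 0, and let 0 < r_P < r_A be such that 2ξ − 2ψ(r) − Λ²/r² > 0 for r ∈ (r_P, r_A) and vanishes at r_P and r_A. Then the apsidal angle Θ := 2Λ·∫_{r_P}^{r_A} dr/(r²·√(2ξ − 2ψ(r) − Λ²/r²)) equals π·Λ/√(Λ² + λ); in particular it is independent of ξ. -/
/-! On the Harmonic family the radicand `2ξ − 2ψ₁(r) − Λ²/r²` is `c − B/r² − (ω²/4) r²` with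
`B = Λ² + λ`. Since it vanishes at `r_P` and `r_A`, Vieta's formulas give
`B = (ω²/4) r_P² r_A²` and the radicand factors as `(ω²/4)(r² − r_P²)(r_A² − r²)/r²`.
In the variable `t = 1/r²` the integral `∫ dr / (r² √·)` becomes
`(1/√B) ∫ dt / (2√((t − t_A)(t_P − t)))`, whose primitive is an arcsine of an affine function
of `t`; the `t`-integral is `π/2` whatever the endpoints. The integrand is nonnegative, so the
integrability of this improper integral comes for free with the primitive. -/

open MeasureTheory Set Real intervalIntegral

theorem HasDerivAt.arcsin_of_one_sub_sq_eq {g : ℝ → ℝ} {g' s x : ℝ} (hg : HasDerivAt g g' x)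
    (hs : 0 < s) (h : 1 - g x ^ 2 = s ^ 2) :
    HasDerivAt (fun y => arcsin (g y)) (g' / s) x := by
  have hlt : |g x| < 1 := by
    rw [← sq_lt_one_iff_abs_lt_one]
    nlinarith
  obtain ⟨hgt, hlt⟩ := abs_lt.mp hlt
  have := (hasDerivAt_arcsin hgt.ne' hlt.ne).comp x hg
  rwa [h, sqrt_sq hs.le, one_div, inv_mul_eq_div] at this

section ApsidalIntegral

variable {p q r : ℝ}

theorem hasDerivAt_arcsin_apsidal (hp : 0 < p) (hr : r ∈ Ioo p q) :
    HasDerivAt (fun x => arcsin ((p ^ 2 + q ^ 2 - 2 * p ^ 2 * q ^ 2 / x ^ 2) / (q ^ 2 - p ^ 2)))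
      (2 * p * q / (r * √((r ^ 2 - p ^ 2) * (q ^ 2 - r ^ 2)))) r := by
  obtain ⟨hpr, hrq⟩ := hr
  have hr0 : 0 < r := hp.trans hpr
  have hq : 0 < q := hr0.trans hrq
  have hgap : 0 < q ^ 2 - p ^ 2 := by nlinarith
  have hprod : 0 < (r ^ 2 - p ^ 2) * (q ^ 2 - r ^ 2) := mul_pos (by nlinarith) (by nlinarith)
  set S := √((r ^ 2 - p ^ 2) * (q ^ 2 - r ^ 2)) with hS
  have hS0 : 0 < S := sqrt_pos.mpr hprod
  have hg : HasDerivAt (fun x => (p ^ 2 + q ^ 2 - 2 * p ^ 2 * q ^ 2 / x ^ 2) / (q ^ 2 - p ^ 2))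
      (4 * p ^ 2 * q ^ 2 / (r ^ 3 * (q ^ 2 - p ^ 2))) r := by
    have := ((((hasDerivAt_const r (2 * p ^ 2 * q ^ 2)).div (hasDerivAt_pow 2 r)
      (by positivity)).const_sub (p ^ 2 + q ^ 2)).div_const (q ^ 2 - p ^ 2))
    refine this.congr_deriv ?_
    field_simp
    ring
  have hsq : 1 - ((p ^ 2 + q ^ 2 - 2 * p ^ 2 * q ^ 2 / r ^ 2) / (q ^ 2 - p ^ 2)) ^ 2
      = (2 * p * q * S / (r ^ 2 * (q ^ 2 - p ^ 2))) ^ 2 := by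
    rw [div_pow (2 * p * q * S), mul_pow, hS, sq_sqrt hprod.le]
    field_simp
    ring
  refine (hg.arcsin_of_one_sub_sq_eq (by positivity) hsq).congr_deriv ?_
  field_simp
  ring

theorem integral_one_div_mul_sqrt_sq_sub_sq_mul_sq_sub_sq (hp : 0 < p) (hpq : p < q) :
    ∫ r in p..q, 1 / (r * √((r ^ 2 - p ^ 2) * (q ^ 2 - r ^ 2))) = π / (2 * p * q) := by
  set G : ℝ → ℝ := fun x =>
    arcsin ((p ^ 2 + q ^ 2 - 2 * p ^ 2 * q ^ 2 / x ^ 2) / (q ^ 2 - p ^ 2)) / (2 * p * q)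
  have hq : 0 < q := hp.trans hpq
  have hgap : q ^ 2 - p ^ 2 ≠ 0 := (sub_pos.2 (pow_lt_pow_left₀ hpq hp.le two_ne_zero)).ne'
  have hderiv : ∀ r ∈ Ioo p q,
      HasDerivAt G (1 / (r * √((r ^ 2 - p ^ 2) * (q ^ 2 - r ^ 2)))) r := fun r hr =>
    ((hasDerivAt_arcsin_apsidal hp hr).div_const (2 * p * q)).congr_deriv (by field_simp)
  have hcont : ContinuousOn G (Icc p q) := by
    refine (continuous_arcsin.comp_continuousOn ?_).div_const _
    have hx2 : ∀ x ∈ Icc p q, x ^ 2 ≠ 0 := fun x hx => (pow_pos (hp.trans_le hx.1) 2).ne'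
    fun_prop (disch := assumption)
  have hnonneg : ∀ r ∈ Ioo p q, 0 ≤ 1 / (r * √((r ^ 2 - p ^ 2) * (q ^ 2 - r ^ 2))) :=
    fun r hr => by have := hp.trans hr.1; positivity
  have hint := (intervalIntegrable_iff_integrableOn_Ioc_of_le hpq.le).2
    (integrableOn_deriv_of_nonneg hcont hderiv hnonneg)
  have hGp : G p = -(π / 2) / (2 * p * q) := by
    simp only [G]
    rw [← arcsin_neg_one]
    congr 2
    field_simp
    ring
  have hGq : G q = π / 2 / (2 * p * q) := by
    simp only [G]
    rw [← arcsin_one]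
    congr 2
    field_simp
    ring
  rw [integral_eq_sub_of_hasDerivAt_of_le hpq.le hcont hderiv hint, hGp, hGq]
  ring

end ApsidalIntegral

theorem harmonic_radicand_eq (ω ε lam ξ Λ r : ℝ) :
    2 * ξ - 2 * (ε + lam / (2 * r ^ 2) + ω ^ 2 * r ^ 2 / 8) - Λ ^ 2 / r ^ 2
      = 2 * (ξ - ε) - (Λ ^ 2 + lam) / r ^ 2 - ω ^ 2 / 4 * r ^ 2 := by
  ring

theorem coeffs_eq_of_sub_div_sq_sub_mul_sq_eq_zero {c B a p q : ℝ} (hp : p ≠ 0) (hq : q ≠ 0)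
    (hpq : p ^ 2 ≠ q ^ 2) (hP : c - B / p ^ 2 - a * p ^ 2 = 0)
    (hQ : c - B / q ^ 2 - a * q ^ 2 = 0) :
    c = a * (p ^ 2 + q ^ 2) ∧ B = a * (p * q) ^ 2 := by
  field_simp at hP hQ
  have hc : (c - a * (p ^ 2 + q ^ 2)) * (p ^ 2 - q ^ 2) = 0 := by linear_combination hP - hQ
  have hc := sub_eq_zero.1 ((mul_eq_zero.1 hc).resolve_right (sub_ne_zero.2 hpq))
  exact ⟨hc, by linear_combination -hP + p ^ 2 * hc⟩

theorem harmonic_family_apsidal_angle_general (ω ε lam ξ Λ r_P r_A : ℝ)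
    (hrP : 0 < r_P) (hr : r_P < r_A)
    (hP : 2 * ξ - 2 * (ε + lam / (2 * r_P ^ 2) + ω ^ 2 * r_P ^ 2 / 8)
        - Λ ^ 2 / r_P ^ 2 = 0)
    (hA : 2 * ξ - 2 * (ε + lam / (2 * r_A ^ 2) + ω ^ 2 * r_A ^ 2 / 8)
        - Λ ^ 2 / r_A ^ 2 = 0) :
    (2 * Λ * ∫ r in r_P..r_A, 1 / (r ^ 2 * Real.sqrt
        (2 * ξ - 2 * (ε + lam / (2 * r ^ 2) + ω ^ 2 * r ^ 2 / 8) - Λ ^ 2 / r ^ 2))) =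
      Real.pi * Λ / Real.sqrt (Λ ^ 2 + lam) := by
  have hrA : 0 < r_A := hrP.trans hr
  simp only [harmonic_radicand_eq] at hP hA ⊢
  obtain ⟨hc, hB⟩ := coeffs_eq_of_sub_div_sq_sub_mul_sq_eq_zero hrP.ne' hrA.ne'
    (pow_lt_pow_left₀ hr hrP.le two_ne_zero).ne hP hA
  have hintegrand : ∀ r ∈ uIcc r_P r_A,
      1 / (r ^ 2 * √(2 * (ξ - ε) - (Λ ^ 2 + lam) / r ^ 2 - ω ^ 2 / 4 * r ^ 2))
        = (√(ω ^ 2 / 4))⁻¹ * (1 / (r * √((r ^ 2 - r_P ^ 2) * (r_A ^ 2 - r ^ 2)))) := by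
    intro r hx
    have hr0 : 0 < r := hrP.trans_le ((le_min le_rfl hr.le).trans hx.1)
    have hfactor : 2 * (ξ - ε) - (Λ ^ 2 + lam) / r ^ 2 - ω ^ 2 / 4 * r ^ 2
        = ω ^ 2 / 4 * ((r ^ 2 - r_P ^ 2) * (r_A ^ 2 - r ^ 2)) / r ^ 2 := by
      rw [hc, hB]
      field_simp
      ring
    rw [hfactor, sqrt_div' _ (sq_nonneg r), sqrt_mul (by positivity), sqrt_sq hr0.le]
    field_simp
  rw [intervalIntegral.integral_congr hintegrand, intervalIntegral.integral_const_mul,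
    integral_one_div_mul_sqrt_sq_sub_sq_mul_sq_sub_sq hrP hr, hB, sqrt_mul (by positivity),
    sqrt_sq (by positivity)]
  ring

/-- In a potential of the Harmonic family `ψ(r) = ε + λ/(2r²) + ω²r²/8`, the apsidal
angle of any bound orbit of angular momentum `Λ > 0` (with `Λ² + λ > 0`) equals
`πΛ/√(Λ² + λ)`, independently of the energy `ξ`. -/
theorem harmonic_family_apsidal_angle (ω ε lam ξ Λ r_P r_A : ℝ) (hω : 0 < ω)
    (hΛ : 0 < Λ) (hΛlam : 0 < Λ ^ 2 + lam)
    (hrP : 0 < r_P) (hr : r_P < r_A)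
    (hpos : ∀ r ∈ Set.Ioo r_P r_A,
      0 < 2 * ξ - 2 * (ε + lam / (2 * r ^ 2) + ω ^ 2 * r ^ 2 / 8) - Λ ^ 2 / r ^ 2)
    (hP : 2 * ξ - 2 * (ε + lam / (2 * r_P ^ 2) + ω ^ 2 * r_P ^ 2 / 8)
        - Λ ^ 2 / r_P ^ 2 = 0)
    (hA : 2 * ξ - 2 * (ε + lam / (2 * r_A ^ 2) + ω ^ 2 * r_A ^ 2 / 8)
        - Λ ^ 2 / r_A ^ 2 = 0) :
    (2 * Λ * ∫ r in r_P..r_A, 1 / (r ^ 2 * Real.sqrt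
        (2 * ξ - 2 * (ε + lam / (2 * r ^ 2) + ω ^ 2 * r ^ 2 / 8) - Λ ^ 2 / r ^ 2))) =
      Real.pi * Λ / Real.sqrt (Λ ^ 2 + lam) :=
  harmonic_family_apsidal_angle_general ω ε lam ξ Λ r_P r_A hrP hr hP hA
end

section
/- Let μ > 0, β ≥ 0, ε ∈ ℝ, λ ∈ ℝ, and ψ(r) := ε + λ/(2r²) − μ/(β + √(β² + r²)) (a potential of the Hénon family). Let ξ ∈ ℝ and Λ > 0 with Λ² + λ > 0, and let 0 < r_P < r_A be such that 2ξ − 2ψ(r) − Λ²/r² > 0 for r ∈ (r_P, r_A) and vanishes at r_P and r_A. Then the apsidal angle Θ := 2Λ·∫_{r_P}^{r_A} dr/(r²·√(2ξ − 2ψ(r) − Λ²/r²)) equals π·Λ/√(Λ² + λ) + π·Λ/√(Λ² + λ + 4μβ); in particular it is independent of ξ. -/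
open Real Set MeasureTheory intervalIntegral

/-!
Substituting `x = β + √(β² + r²)`, so that `r² = x (x - 2β)`, turns `r² (2ξ - 2ψ₃(r) - Λ²/r²)`
into a quadratic in `x` vanishing at the images `p < q` of the apsides; being positive between
them, it equals `a (x - p)(q - x)` with `a = 2ε - 2ξ > 0`. Since
`dr / r = (x - β) dx / (x (x - 2β)) = (1/x + 1/(x - 2β)) dx / 2`, the apsidal integral splits
into two Kepler-type integrals `∫_p^q dy / (y √((y - p)(q - y))) = π / √(pq)`, in `y = x` and in
`y = x - 2β`, and Vieta's formulas give `a p q = Λ² + λ + 4μβ`, `a (p - 2β)(q - 2β) = Λ² + λ`.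
-/

noncomputable def apsidalArcsin (p q y : ℝ) : ℝ :=
  arcsin (((p + q) * y - 2 * p * q) / ((q - p) * y)) / √(p * q)

section apsidalArcsin

variable {p q y : ℝ}

theorem hasDerivAt_apsidalArcsin (hp : 0 < p) (hpy : p < y) (hyq : y < q) :
    HasDerivAt (apsidalArcsin p q) (1 / (y * √((y - p) * (q - y)))) y := by
  have hy : 0 < y := hp.trans hpy
  have hqp : 0 < q - p := by linarith
  have hpq : 0 < p * q := by nlinarith
  set W : ℝ → ℝ := fun y ↦ ((p + q) * y - 2 * p * q) / ((q - p) * y)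
  have hW : HasDerivAt W (2 * p * q / ((q - p) * y ^ 2)) y := by
    have := ((((hasDerivAt_id y).const_mul (p + q)).sub_const (2 * p * q)).div
      ((hasDerivAt_id y).const_mul (q - p)) (by positivity))
    refine this.congr_deriv ?_
    simp only [id]
    field_simp
    ring
  have hW_lt : W y < 1 := by rw [div_lt_one (by positivity)]; nlinarith
  have hW_gt : -1 < W y := by rw [lt_div_iff₀ (by positivity)]; nlinarith
  -- `1 - W² = 4pq(y - p)(q - y) / ((q - p)y)²`
  have hsqrt : √(1 - W y ^ 2) = 2 * √(p * q) * √((y - p) * (q - y)) / ((q - p) * y) := by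
    rw [← sqrt_sq (by positivity : 0 ≤ 2 * √(p * q) * √((y - p) * (q - y)) / ((q - p) * y))]
    congr 1
    rw [div_pow, div_pow, mul_pow, mul_pow, mul_pow, sq_sqrt hpq.le, sq_sqrt (by nlinarith)]
    field_simp
    ring
  have hG : 0 < √((y - p) * (q - y)) := sqrt_pos.2 (by nlinarith)
  have hs : 0 < √(p * q) := sqrt_pos.2 hpq
  refine (((hasDerivAt_arcsin hW_gt.ne' hW_lt.ne).comp y hW).div_const (√(p * q))).congr_deriv ?_
  rw [hsqrt]
  field_simp
  rw [sq_sqrt hpq.le]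

theorem apsidalArcsin_left (hp : 0 < p) (hpq : p < q) :
    apsidalArcsin p q p = -(π / 2) / √(p * q) := by
  rw [apsidalArcsin, show ((p + q) * p - 2 * p * q) / ((q - p) * p) = -1 by
    field_simp [(by linarith : q - p ≠ 0)]; ring, arcsin_neg_one]

theorem apsidalArcsin_right (hp : 0 < p) (hpq : p < q) :
    apsidalArcsin p q q = π / 2 / √(p * q) := by
  rw [apsidalArcsin, show ((p + q) * q - 2 * p * q) / ((q - p) * q) = 1 by
    field_simp [(by linarith : q - p ≠ 0), (by linarith : q ≠ 0)]; ring, arcsin_one]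

theorem continuousOn_apsidalArcsin (hp : 0 < p) (hpq : p < q) :
    ContinuousOn (apsidalArcsin p q) (Ici p) := by
  refine (continuous_arcsin.comp_continuousOn (.div (by fun_prop) (by fun_prop) ?_)).div_const _
  intro y hy
  have : p ≤ y := hy
  have : q - p ≠ 0 := by linarith
  have : y ≠ 0 := by linarith
  positivity

end apsidalArcsin

noncomputable def isochroneVar (β r : ℝ) : ℝ := β + √(β ^ 2 + r ^ 2)

section isochroneVar

variable {β r : ℝ}

theorem isochroneVar_mul_sub_two_mul (β r : ℝ) :
    isochroneVar β r * (isochroneVar β r - 2 * β) = r ^ 2 := by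
  have := sq_sqrt (by positivity : 0 ≤ β ^ 2 + r ^ 2)
  rw [isochroneVar]
  linear_combination this

theorem abs_lt_sqrt_sq_add_sq (hr : r ≠ 0) : |β| < √(β ^ 2 + r ^ 2) := by
  rw [← sqrt_sq_eq_abs]
  exact sqrt_lt_sqrt (sq_nonneg β) (lt_add_of_pos_right _ (by positivity))

theorem two_mul_lt_isochroneVar (hr : r ≠ 0) : 2 * β < isochroneVar β r := by
  have := abs_lt_sqrt_sq_add_sq (β := β) hr
  rw [isochroneVar]
  linarith [le_abs_self β]

theorem isochroneVar_pos (hr : r ≠ 0) : 0 < isochroneVar β r := by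
  have := abs_lt_sqrt_sq_add_sq (β := β) hr
  rw [isochroneVar]
  linarith [neg_abs_le β]

theorem strictMonoOn_isochroneVar (β : ℝ) : StrictMonoOn (isochroneVar β) (Ici 0) := by
  intro r hr s hs hrs
  have : r ^ 2 < s ^ 2 := by nlinarith [mem_Ici.1 hr]
  unfold isochroneVar
  gcongr

theorem hasDerivAt_isochroneVar (hr : r ≠ 0) :
    HasDerivAt (isochroneVar β) (r / √(β ^ 2 + r ^ 2)) r := by
  have hs : β ^ 2 + r ^ 2 ≠ 0 := by positivity
  refine ((((hasDerivAt_pow 2 r).const_add (β ^ 2)).sqrt hs).const_add β).congr_deriv ?_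
  field_simp
  norm_num

end isochroneVar

section isochroneIntegral

variable {β p q : ℝ}

theorem hasDerivAt_apsidalArcsin_comp_isochroneVar {r : ℝ} (hp : 0 < p) (h2β : 2 * β < p)
    (hr : r ≠ 0) (hpx : p < isochroneVar β r) (hxq : isochroneVar β r < q) :
    HasDerivAt (fun r ↦ apsidalArcsin p q (isochroneVar β r)
        + apsidalArcsin (p - 2 * β) (q - 2 * β) (isochroneVar β r - 2 * β))
      (2 / (r * √((isochroneVar β r - p) * (q - isochroneVar β r)))) r := by
  have hx := hasDerivAt_isochroneVar (β := β) hr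
  have h1 := (hasDerivAt_apsidalArcsin hp hpx hxq).comp r hx
  have h2 := (hasDerivAt_apsidalArcsin (by linarith) (by linarith : p - 2 * β < _ - 2 * β)
    (by linarith : _ - 2 * β < q - 2 * β)).comp r (hx.sub_const (2 * β))
  refine (h1.add h2).congr_deriv ?_
  have hrx := isochroneVar_mul_sub_two_mul β r
  have hsqrt : isochroneVar β r - β = √(β ^ 2 + r ^ 2) := by rw [isochroneVar]; ring
  have hG : 0 < √((isochroneVar β r - p) * (q - isochroneVar β r)) :=
    sqrt_pos.2 (mul_pos (by linarith) (by linarith))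
  rw [show (isochroneVar β r - 2 * β - (p - 2 * β)) * (q - 2 * β - (isochroneVar β r - 2 * β))
    = (isochroneVar β r - p) * (q - isochroneVar β r) by ring, ← hsqrt]
  set x := isochroneVar β r
  have hx2β : x - 2 * β ≠ 0 := by linarith
  have hx0 : x ≠ 0 := by linarith
  have hxβ : x - β ≠ 0 := by linarith
  -- partial fractions: `1/x + 1/(x - 2β) = 2(x - β)/r²`
  rw [← add_mul, div_add_div _ _ (mul_ne_zero hx0 hG.ne') (mul_ne_zero hx2β hG.ne'),
    div_mul_div_comm, div_eq_div_iff (by positivity) (by positivity)]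
  linear_combination (-2 * √((x - p) * (q - x)) ^ 2 * (x - β)) * hrx

theorem integral_one_div_mul_sqrt_isochroneVar {a r_P r_A : ℝ} (ha : 0 < a) (hrP : 0 < r_P)
    (hr : r_P < r_A) (hp : isochroneVar β r_P = p) (hq : isochroneVar β r_A = q) :
    ∫ r in r_P..r_A, 1 / (r * √(a * ((isochroneVar β r - p) * (q - isochroneVar β r)))) =
      π / (2 * √(a * (p * q))) + π / (2 * √(a * ((p - 2 * β) * (q - 2 * β)))) := by
  have hmono : StrictMonoOn (isochroneVar β) (Icc r_P r_A) :=
    (strictMonoOn_isochroneVar β).mono fun r hr ↦ mem_Ici.2 (hrP.le.trans hr.1)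
  have hx_Icc : MapsTo (isochroneVar β) (Icc r_P r_A) (Icc p q) :=
    hp ▸ hq ▸ hmono.monotoneOn.mapsTo_Icc
  have hx_Ioo : MapsTo (isochroneVar β) (Ioo r_P r_A) (Ioo p q) := hp ▸ hq ▸ hmono.mapsTo_Ioo
  have hp0 : 0 < p := hp ▸ isochroneVar_pos hrP.ne'
  have h2β : 2 * β < p := hp ▸ two_mul_lt_isochroneVar hrP.ne'
  have hpq : p < q := hp ▸ hq ▸ hmono (left_mem_Icc.2 hr.le) (right_mem_Icc.2 hr.le) hr
  set F := fun r ↦ (apsidalArcsin p q (isochroneVar β r)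
    + apsidalArcsin (p - 2 * β) (q - 2 * β) (isochroneVar β r - 2 * β)) / (2 * √a)
  have hcont : ContinuousOn F (Icc r_P r_A) := by
    have hx : Continuous (isochroneVar β) := by unfold isochroneVar; fun_prop
    refine .div_const (.add ?_ ?_) _
    · exact (continuousOn_apsidalArcsin hp0 hpq).comp hx.continuousOn fun r hr ↦ (hx_Icc hr).1
    · exact (continuousOn_apsidalArcsin (by linarith) (by linarith)).comp
        (hx.sub continuous_const).continuousOn fun r hr ↦ by
          simp only [mem_Ici]; linarith [(hx_Icc hr).1]
  have hderiv : ∀ r ∈ Ioo r_P r_A, HasDerivAt F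
      (1 / (r * √(a * ((isochroneVar β r - p) * (q - isochroneVar β r))))) r := by
    intro r hr
    have hr0 : 0 < r := hrP.trans hr.1
    refine ((hasDerivAt_apsidalArcsin_comp_isochroneVar hp0 h2β hr0.ne' (hx_Ioo hr).1
      (hx_Ioo hr).2).div_const _).congr_deriv ?_
    rw [sqrt_mul ha.le]
    have := sqrt_pos.2 ha
    field_simp
  have hnonneg : ∀ r ∈ Ioo r_P r_A,
      0 ≤ 1 / (r * √(a * ((isochroneVar β r - p) * (q - isochroneVar β r)))) := by
    intro r hr
    have := hrP.trans hr.1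
    positivity
  rw [integral_eq_sub_of_hasDerivAt_of_le hr.le hcont hderiv
    ((intervalIntegrable_iff_integrableOn_Ioc_of_le hr.le).2
      (integrableOn_deriv_of_nonneg hcont hderiv hnonneg))]
  simp only [F, hp, hq, apsidalArcsin_left, apsidalArcsin_right, hp0, hpq, sub_pos.2 h2β,
    sub_lt_sub_right hpq]
  rw [sqrt_mul ha.le, sqrt_mul ha.le]
  ring

end isochroneIntegral

theorem quadratic_eq_mul_sub_mul_sub_s11 {c b d p q : ℝ} (hpq : p ≠ q)
    (hp : c * p ^ 2 + b * p - d = 0) (hq : c * q ^ 2 + b * q - d = 0) (z : ℝ) :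
    c * z ^ 2 + b * z - d = c * (z - p) * (z - q) := by
  have hsum : c * (p + q) + b = 0 :=
    (mul_eq_zero.1 (by linear_combination hp - hq : (p - q) * (c * (p + q) + b) = 0)).resolve_left
      (sub_ne_zero.2 hpq)
  linear_combination (z - p) * hsum + hp

noncomputable def henonPotential (μ β ε lam r : ℝ) : ℝ :=
  ε + lam / (2 * r ^ 2) - μ / isochroneVar β r

theorem sq_mul_sub_henonPotential (μ β ε lam ξ Λ : ℝ) {r : ℝ} (hr : r ≠ 0) :
    r ^ 2 * (2 * ξ - 2 * henonPotential μ β ε lam r - Λ ^ 2 / r ^ 2) =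
      (2 * ξ - 2 * ε) * isochroneVar β r ^ 2 + (2 * μ - 2 * β * (2 * ξ - 2 * ε)) * isochroneVar β r
        - (Λ ^ 2 + lam + 4 * μ * β) := by
  have hrx := isochroneVar_mul_sub_two_mul β r
  have hx : isochroneVar β r ≠ 0 := (isochroneVar_pos hr).ne'
  rw [henonPotential]
  set x := isochroneVar β r
  field_simp
  linear_combination (-2 * ((ξ - ε) * x + μ)) * hrx

theorem henon_quadratic_eq_of_apsides {μ β ε lam ξ Λ r_P r_A : ℝ} (hrP : 0 < r_P)
    (hr : r_P < r_A) (hP : 2 * ξ - 2 * henonPotential μ β ε lam r_P - Λ ^ 2 / r_P ^ 2 = 0)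
    (hA : 2 * ξ - 2 * henonPotential μ β ε lam r_A - Λ ^ 2 / r_A ^ 2 = 0) (z : ℝ) :
    (2 * ξ - 2 * ε) * z ^ 2 + (2 * μ - 2 * β * (2 * ξ - 2 * ε)) * z - (Λ ^ 2 + lam + 4 * μ * β) =
      (2 * ξ - 2 * ε) * (z - isochroneVar β r_P) * (z - isochroneVar β r_A) :=
  have hrA : 0 < r_A := hrP.trans hr
  quadratic_eq_mul_sub_mul_sub_s11 (strictMonoOn_isochroneVar β hrP.le hrA.le hr).ne
    ((sq_mul_sub_henonPotential μ β ε lam ξ Λ hrP.ne').symm.trans (mul_eq_zero_of_right _ hP))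
    ((sq_mul_sub_henonPotential μ β ε lam ξ Λ hrA.ne').symm.trans (mul_eq_zero_of_right _ hA)) z

theorem henon_family_apsidal_angle_general (μ β ε lam ξ Λ r_P r_A : ℝ)
    (hrP : 0 < r_P) (hr : r_P < r_A)
    (hpos : ∀ r ∈ Set.Ioo r_P r_A,
      0 < 2 * ξ - 2 * (ε + lam / (2 * r ^ 2) - μ / (β + Real.sqrt (β ^ 2 + r ^ 2)))
        - Λ ^ 2 / r ^ 2)
    (hP : 2 * ξ - 2 * (ε + lam / (2 * r_P ^ 2)
        - μ / (β + Real.sqrt (β ^ 2 + r_P ^ 2))) - Λ ^ 2 / r_P ^ 2 = 0)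
    (hA : 2 * ξ - 2 * (ε + lam / (2 * r_A ^ 2)
        - μ / (β + Real.sqrt (β ^ 2 + r_A ^ 2))) - Λ ^ 2 / r_A ^ 2 = 0) :
    (2 * Λ * ∫ r in r_P..r_A, 1 / (r ^ 2 * Real.sqrt
        (2 * ξ - 2 * (ε + lam / (2 * r ^ 2) - μ / (β + Real.sqrt (β ^ 2 + r ^ 2)))
          - Λ ^ 2 / r ^ 2))) =
      Real.pi * Λ / Real.sqrt (Λ ^ 2 + lam)
        + Real.pi * Λ / Real.sqrt (Λ ^ 2 + lam + 4 * μ * β) := by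
  simp only [show ∀ r, ε + lam / (2 * r ^ 2) - μ / (β + √(β ^ 2 + r ^ 2))
    = henonPotential μ β ε lam r from fun _ ↦ rfl] at hpos hP hA ⊢
  set x := isochroneVar β
  have hrA : 0 < r_A := hrP.trans hr
  have hmono := strictMonoOn_isochroneVar β
  have hroots := henon_quadratic_eq_of_apsides hrP hr hP hA
  have hfactor : ∀ r ≠ 0, r ^ 2 * (2 * ξ - 2 * henonPotential μ β ε lam r - Λ ^ 2 / r ^ 2) =
      (2 * ε - 2 * ξ) * ((x r - x r_P) * (x r_A - x r)) := fun r hr0 ↦ by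
    rw [sq_mul_sub_henonPotential μ β ε lam ξ Λ hr0, hroots]
    ring
  -- between the apsides both the radial term and `(x r - x r_P)(x r_A - x r)` are positive
  have ha : 0 < 2 * ε - 2 * ξ := by
    obtain ⟨m, hm⟩ := nonempty_Ioo.2 hr
    have hm0 : 0 < m := hrP.trans hm.1
    refine pos_of_mul_pos_left (hfactor m hm0.ne' ▸ mul_pos (pow_pos hm0 2) (hpos m hm)) ?_
    exact (mul_pos (sub_pos.2 (hmono hrP.le hm0.le hm.1))
      (sub_pos.2 (hmono hm0.le hrA.le hm.2))).le
  have hintegrand :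
      EqOn (fun r ↦ 1 / (r ^ 2 * √(2 * ξ - 2 * henonPotential μ β ε lam r - Λ ^ 2 / r ^ 2)))
        (fun r ↦ 1 / (r * √((2 * ε - 2 * ξ) * ((x r - x r_P) * (x r_A - x r)))))
        (uIcc r_P r_A) := by
    intro r hr_mem
    have hr0 : 0 < r := hrP.trans_le (uIcc_of_le hr.le ▸ hr_mem).1
    dsimp only
    rw [← hfactor r hr0.ne', sqrt_mul (sq_nonneg r), sqrt_sq hr0.le, ← mul_assoc, ← sq]
  rw [integral_congr hintegrand, integral_one_div_mul_sqrt_isochroneVar ha hrP hr rfl rfl]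
  rw [show (2 * ε - 2 * ξ) * (x r_P * x r_A) = Λ ^ 2 + lam + 4 * μ * β by
      linear_combination hroots 0,
    show (2 * ε - 2 * ξ) * ((x r_P - 2 * β) * (x r_A - 2 * β)) = Λ ^ 2 + lam by
      linear_combination hroots (2 * β)]
  ring

/-- In a potential of the Hénon family `ψ(r) = ε + λ/(2r²) - μ/(β + √(β² + r²))`,
the apsidal angle of any bound orbit of angular momentum `Λ > 0` (with `Λ² + λ > 0`)
equals `πΛ/√(Λ² + λ) + πΛ/√(Λ² + λ + 4μβ)`, independently of the energy `ξ`. -/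
theorem henon_family_apsidal_angle (μ β ε lam ξ Λ r_P r_A : ℝ)
    (hμ : 0 < μ) (hβ : 0 ≤ β)
    (hΛ : 0 < Λ) (hΛlam : 0 < Λ ^ 2 + lam)
    (hrP : 0 < r_P) (hr : r_P < r_A)
    (hpos : ∀ r ∈ Set.Ioo r_P r_A,
      0 < 2 * ξ - 2 * (ε + lam / (2 * r ^ 2) - μ / (β + Real.sqrt (β ^ 2 + r ^ 2)))
        - Λ ^ 2 / r ^ 2)
    (hP : 2 * ξ - 2 * (ε + lam / (2 * r_P ^ 2)
        - μ / (β + Real.sqrt (β ^ 2 + r_P ^ 2))) - Λ ^ 2 / r_P ^ 2 = 0)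
    (hA : 2 * ξ - 2 * (ε + lam / (2 * r_A ^ 2)
        - μ / (β + Real.sqrt (β ^ 2 + r_A ^ 2))) - Λ ^ 2 / r_A ^ 2 = 0) :
    (2 * Λ * ∫ r in r_P..r_A, 1 / (r ^ 2 * Real.sqrt
        (2 * ξ - 2 * (ε + lam / (2 * r ^ 2) - μ / (β + Real.sqrt (β ^ 2 + r ^ 2)))
          - Λ ^ 2 / r ^ 2))) =
      Real.pi * Λ / Real.sqrt (Λ ^ 2 + lam)
        + Real.pi * Λ / Real.sqrt (Λ ^ 2 + lam + 4 * μ * β) :=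
  henon_family_apsidal_angle_general μ β ε lam ξ Λ r_P r_A hrP hr hpos hP hA
end

section
/- Let μ > 0, β > 0, ε ∈ ℝ, λ ∈ ℝ, and ψ(r) := ε + λ/(2r²) + μ/(β + √(β² − r²)) defined for 0 < r < β (a potential of the Bounded family). Let ξ ∈ ℝ and Λ > 0 with Λ² + λ > 0, and let 0 < r_P < r_A < β be such that 2ξ − 2ψ(r) − Λ²/r² > 0 for r ∈ (r_P, r_A) and vanishes at r_P and r_A. Then the apsidal angle Θ := 2Λ·∫_{r_P}^{r_A} dr/(r²·√(2ξ − 2ψ(r) − Λ²/r²)) equals π·Λ/√(Λ² + λ) − π·Λ/√(Λ² + λ + 4μβ); in particular it is independent of ξ. -/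
/-!
Put `s = √(β² - r²)`, so `r² = (β - s)(β + s)`. Then the radicand is `Q(s)/r²` with the quadratic
`Q(s) = E(β² - s²) + 2μs - (Λ² + λ + 2μβ)`, `E = 2ξ - 2ε`. The apsides make `a = s(r_A)` and
`b = s(r_P)` its roots, so `Q(s) = E(b - s)(s - a)` with `E > 0`, and evaluating at `s = ±β` gives
`E(β - a)(β - b) = Λ² + λ` and `E(β + a)(β + b) = Λ² + λ + 4μβ`.
Since `dr/r = -½ (1/(β - s) - 1/(β + s)) ds`, the apsidal integral splits into two integrals
`∫ₐᵇ ds / (|c - s| √((b - s)(s - a)))`, `c = ±β`, each equal to `π/√((c - a)(c - b))`: a primitive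
is the arcsine of the Möbius function of `s` that maps `a, b` to `-1, 1`.
-/

open Real Set intervalIntegral

noncomputable def arcsinMobius (a b c t : ℝ) : ℝ :=
  arcsin ((2 * (c - a) * (c - b) / (c - t) - (2 * c - a - b)) / (b - a))

section arcsinMobius

variable {a b c t : ℝ}

theorem arcsinMobius_left (hab : a ≠ b) (hca : c ≠ a) : arcsinMobius a b c a = -(π / 2) := by
  have hba : b - a ≠ 0 := sub_ne_zero.2 hab.symm
  have : (2 * (c - a) * (c - b) / (c - a) - (2 * c - a - b)) / (b - a) = -1 := by
    field_simp [sub_ne_zero.2 hca]; ring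
  rw [arcsinMobius, this, arcsin_neg_one]

theorem arcsinMobius_right (hab : a ≠ b) (hcb : c ≠ b) : arcsinMobius a b c b = π / 2 := by
  have hba : b - a ≠ 0 := sub_ne_zero.2 hab.symm
  have : (2 * (c - a) * (c - b) / (c - b) - (2 * c - a - b)) / (b - a) = 1 := by
    field_simp [sub_ne_zero.2 hcb]; ring
  rw [arcsinMobius, this, arcsin_one]

theorem continuousAt_arcsinMobius (htc : t ≠ c) : ContinuousAt (arcsinMobius a b c) t := by
  have : c - t ≠ 0 := sub_ne_zero.2 htc.symm
  unfold arcsinMobius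
  fun_prop (disch := assumption)

theorem hasDerivAt_arcsinMobius (hat : a < t) (htb : t < b) (hbc : b < c) :
    HasDerivAt (arcsinMobius a b c)
      (√((c - a) * (c - b)) / ((c - t) * √((b - t) * (t - a)))) t := by
  set k := √((c - a) * (c - b))
  set w := √((b - t) * (t - a))
  have hk : k ^ 2 = (c - a) * (c - b) := sq_sqrt (by nlinarith)
  have hw : w ^ 2 = (b - t) * (t - a) := sq_sqrt (by nlinarith)
  have hk0 : 0 < k := sqrt_pos.2 (by nlinarith)
  have hw0 : 0 < w := sqrt_pos.2 (by nlinarith)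
  have hct : 0 < c - t := by linarith
  have hba : 0 < b - a := by linarith
  set y := (2 * (c - a) * (c - b) / (c - t) - (2 * c - a - b)) / (b - a)
  have hy : 1 - y ^ 2 = (2 * k * w / ((b - a) * (c - t))) ^ 2 := by
    simp only [y, div_pow, mul_pow, hk, hw]; field_simp; ring
  have hy0 : 0 < 1 - y ^ 2 := hy ▸ by positivity
  have hmob : HasDerivAt (fun t => (2 * (c - a) * (c - b) / (c - t) - (2 * c - a - b)) / (b - a))
      (2 * k ^ 2 / ((c - t) ^ 2 * (b - a))) t := by
    refine (((hasDerivAt_const t _).div ((hasDerivAt_id' t).const_sub c) hct.ne').sub_const _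
      |>.div_const _).congr_deriv ?_
    rw [hk]; field_simp; ring
  refine ((hasDerivAt_arcsin (by nlinarith) (by nlinarith)).comp t hmob).congr_deriv ?_
  rw [hy, sqrt_sq (by positivity)]
  field_simp

end arcsinMobius

theorem hasDerivAt_sqrt_sq_sub_sq {β r : ℝ} (h : r ^ 2 < β ^ 2) :
    HasDerivAt (fun r => √(β ^ 2 - r ^ 2)) (-r / √(β ^ 2 - r ^ 2)) r := by
  refine (((hasDerivAt_pow 2 r).const_sub _).sqrt (by linarith)).congr_deriv ?_
  norm_num; field_simp

/-- The reflection `s ↦ -s` turns the factor `1/(β + s)`, `s ∈ [a, b]`, into `1/(β - s)`,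
`s ∈ [-b, -a]`, so both terms use the same arcsine primitive. -/
noncomputable def radialPrimitive (E a b β r : ℝ) : ℝ :=
  -(arcsinMobius a b β √(β ^ 2 - r ^ 2) / √((β - a) * (β - b))
    + arcsinMobius (-b) (-a) β (-√(β ^ 2 - r ^ 2)) / √((β + b) * (β + a))) / (2 * √E)

section radialPrimitive

variable {E a b β r : ℝ}

theorem hasDerivAt_radialPrimitive (hE : 0 < E) (hr : 0 < r) (ha : 0 ≤ a)
    (has : a < √(β ^ 2 - r ^ 2)) (hsb : √(β ^ 2 - r ^ 2) < b) (hbβ : b < β) :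
    HasDerivAt (radialPrimitive E a b β)
      (1 / (r * √(E * ((b - √(β ^ 2 - r ^ 2)) * (√(β ^ 2 - r ^ 2) - a))))) r := by
  set s := √(β ^ 2 - r ^ 2)
  have hs : 0 < β ^ 2 - r ^ 2 := sqrt_pos.1 (ha.trans_lt has)
  have hrs : r ^ 2 = (β - s) * (β + s) := by linear_combination sq_sqrt hs.le
  have hds : HasDerivAt (fun r => √(β ^ 2 - r ^ 2)) (-r / s) r :=
    hasDerivAt_sqrt_sq_sub_sq (by linarith)
  have h₁ := (hasDerivAt_arcsinMobius has hsb hbβ).comp r hds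
  have h₂ := (hasDerivAt_arcsinMobius (c := β) (neg_lt_neg hsb) (neg_lt_neg has)
    (by linarith)).comp r hds.neg
  refine HasDerivAt.congr_deriv (f := radialPrimitive E a b β)
    (((h₁.div_const _).add (h₂.div_const _)).neg.div_const _) ?_
  have hk₁ : 0 < √((β - a) * (β - b)) := sqrt_pos.2 (by nlinarith)
  have hk₂ : 0 < √((β - -b) * (β - -a)) := sqrt_pos.2 (by nlinarith)
  have hs₀ : 0 < s := ha.trans_lt has
  have hβs : 0 < β - s := by linarith
  have hβs' : 0 < β + s := by linarith
  have hw : (-a - -s) * (-s - -b) = (b - s) * (s - a) := by ring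
  have hw₀ : 0 < √((b - s) * (s - a)) := sqrt_pos.2 (by nlinarith)
  rw [hw, sqrt_mul hE.le]
  simp only [sub_neg_eq_add] at hk₂ ⊢
  field_simp
  rw [hrs]
  ring

theorem continuousAt_radialPrimitive (hβ : 0 < β) (hr : r ≠ 0) :
    ContinuousAt (radialPrimitive E a b β) r := by
  have hs : ContinuousAt (fun r => √(β ^ 2 - r ^ 2)) r := by fun_prop
  have hsβ : √(β ^ 2 - r ^ 2) ≠ β := ((sqrt_lt' hβ).2 (sub_lt_self _ (by positivity))).ne
  have hsβ' : -√(β ^ 2 - r ^ 2) ≠ β := by linarith [sqrt_nonneg (β ^ 2 - r ^ 2)]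
  have h₁ := (continuousAt_arcsinMobius (a := a) (b := b) hsβ).comp
    (f := fun r => √(β ^ 2 - r ^ 2)) hs
  have h₂ := (continuousAt_arcsinMobius (a := -b) (b := -a) hsβ').comp
    (f := fun r => -√(β ^ 2 - r ^ 2)) hs.neg
  exact ((h₁.div_const _).add (h₂.div_const _)).neg.div_const _

end radialPrimitive

theorem integral_one_div_mul_sqrt_radial {E β a b rP rA : ℝ} (hE : 0 < E) (hrP : 0 < rP)
    (hr : rP < rA) (hrA : rA < β) (ha : √(β ^ 2 - rA ^ 2) = a) (hb : √(β ^ 2 - rP ^ 2) = b) :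
    ∫ r in rP..rA, 1 / (r * √(E * ((b - √(β ^ 2 - r ^ 2)) * (√(β ^ 2 - r ^ 2) - a)))) =
      π / (2 * √(E * ((β - a) * (β - b)))) - π / (2 * √(E * ((β + a) * (β + b)))) := by
  have hβ : 0 < β := hrP.trans (hr.trans hrA)
  have hanti : ∀ {r r'}, 0 ≤ r → r < r' → r' ≤ β → √(β ^ 2 - r' ^ 2) < √(β ^ 2 - r ^ 2) :=
    fun hr hrr' hr'β => sqrt_lt_sqrt (by nlinarith) (by nlinarith)
  have ha₀ : 0 ≤ a := ha ▸ sqrt_nonneg _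
  have hab : a < b := ha ▸ hb ▸ hanti hrP.le hr hrA.le
  have hbβ : b < β := by simpa [hb, sqrt_sq hβ.le] using hanti le_rfl hrP (hr.trans hrA).le
  have hderiv : ∀ r ∈ Ioo rP rA, HasDerivAt (radialPrimitive E a b β)
      (1 / (r * √(E * ((b - √(β ^ 2 - r ^ 2)) * (√(β ^ 2 - r ^ 2) - a))))) r :=
    fun r ⟨hPr, hrA'⟩ => hasDerivAt_radialPrimitive hE (hrP.trans hPr) ha₀
      (ha ▸ hanti (hrP.trans hPr).le hrA' hrA.le) (hb ▸ hanti hrP.le hPr (hrA'.trans hrA).le) hbβ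
  have hcont : ContinuousOn (radialPrimitive E a b β) (Icc rP rA) :=
    fun r hr => (continuousAt_radialPrimitive hβ (hrP.trans_le hr.1).ne').continuousWithinAt
  have hint := (intervalIntegrable_iff_integrableOn_Ioc_of_le hr.le).2 <|
    integrableOn_deriv_of_nonneg hcont hderiv fun r hr => by
      have := (hrP.trans hr.1).le; positivity
  rw [integral_eq_sub_of_hasDerivAt_of_le hr.le hcont hderiv hint]
  simp only [radialPrimitive, ha, hb]
  rw [arcsinMobius_left hab.ne (hab.trans hbβ).ne', arcsinMobius_right hab.ne hbβ.ne',
    arcsinMobius_left (neg_lt_neg hab).ne (by linarith : -b < β).ne',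
    arcsinMobius_right (neg_lt_neg hab).ne (by linarith : -a < β).ne',
    sqrt_mul hE.le, sqrt_mul hE.le, mul_comm (β + b)]
  ring

theorem radicand_eq {ξ ε lam μ β Λ r : ℝ} (hr : 0 < r) (hrβ : r < β) :
    2 * ξ - 2 * (ε + lam / (2 * r ^ 2) + μ / (β + √(β ^ 2 - r ^ 2))) - Λ ^ 2 / r ^ 2 =
      ((2 * ξ - 2 * ε) * (β ^ 2 - √(β ^ 2 - r ^ 2) ^ 2) + 2 * μ * √(β ^ 2 - r ^ 2)
        - (Λ ^ 2 + lam + 2 * μ * β)) / r ^ 2 := by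
  have hs : √(β ^ 2 - r ^ 2) ^ 2 = β ^ 2 - r ^ 2 := sq_sqrt (by nlinarith)
  have hβs : 0 < β + √(β ^ 2 - r ^ 2) := by positivity [hr.trans hrβ]
  have hdiv : μ / (β + √(β ^ 2 - r ^ 2)) = μ * (β - √(β ^ 2 - r ^ 2)) / r ^ 2 := by
    rw [div_eq_div_iff hβs.ne' (by positivity)]; linear_combination μ * hs
  rw [hdiv, hs]
  field_simp
  ring

theorem quadratic_eq_zero_of_radicand_eq_zero {ξ ε lam μ β Λ r : ℝ} (hr : 0 < r) (hrβ : r < β)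
    (h : 2 * ξ - 2 * (ε + lam / (2 * r ^ 2) + μ / (β + √(β ^ 2 - r ^ 2))) - Λ ^ 2 / r ^ 2 = 0) :
    (2 * ξ - 2 * ε) * (β ^ 2 - √(β ^ 2 - r ^ 2) ^ 2) + 2 * μ * √(β ^ 2 - r ^ 2)
      - (Λ ^ 2 + lam + 2 * μ * β) = 0 := by
  rw [radicand_eq hr hrβ, div_eq_zero_iff] at h
  exact h.resolve_right (by positivity)

theorem sum_roots_eq {E μ β C a b : ℝ} (hab : a ≠ b)
    (ha : E * (β ^ 2 - a ^ 2) + 2 * μ * a - C = 0) (hb : E * (β ^ 2 - b ^ 2) + 2 * μ * b - C = 0) :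
    E * (a + b) = 2 * μ := by
  have : (a - b) * (E * (a + b) - 2 * μ) = 0 := by linear_combination hb - ha
  linarith [(mul_eq_zero.1 this).resolve_left (sub_ne_zero.2 hab)]

theorem quadratic_eq_mul_of_roots {E μ β C a b : ℝ} (hab : a ≠ b)
    (ha : E * (β ^ 2 - a ^ 2) + 2 * μ * a - C = 0) (hb : E * (β ^ 2 - b ^ 2) + 2 * μ * b - C = 0)
    (t : ℝ) : E * (β ^ 2 - t ^ 2) + 2 * μ * t - C = E * ((b - t) * (t - a)) := by
  linear_combination ha - (t - a) * sum_roots_eq hab ha hb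

theorem one_div_sq_mul_sqrt_div_sq {r X : ℝ} (hr : 0 < r) :
    1 / (r ^ 2 * √(X / r ^ 2)) = 1 / (r * √X) := by
  rw [sqrt_div' _ (sq_nonneg r), sqrt_sq hr.le]
  field_simp

theorem bounded_family_apsidal_angle_general (μ β ε lam ξ Λ r_P r_A : ℝ)
    (hμ : 0 < μ)
    (hrP : 0 < r_P) (hr : r_P < r_A) (hrA : r_A < β)
    (hP : 2 * ξ - 2 * (ε + lam / (2 * r_P ^ 2)
        + μ / (β + Real.sqrt (β ^ 2 - r_P ^ 2))) - Λ ^ 2 / r_P ^ 2 = 0)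
    (hA : 2 * ξ - 2 * (ε + lam / (2 * r_A ^ 2)
        + μ / (β + Real.sqrt (β ^ 2 - r_A ^ 2))) - Λ ^ 2 / r_A ^ 2 = 0) :
    (2 * Λ * ∫ r in r_P..r_A, 1 / (r ^ 2 * Real.sqrt
        (2 * ξ - 2 * (ε + lam / (2 * r ^ 2) + μ / (β + Real.sqrt (β ^ 2 - r ^ 2)))
          - Λ ^ 2 / r ^ 2))) =
      Real.pi * Λ / Real.sqrt (Λ ^ 2 + lam)
        - Real.pi * Λ / Real.sqrt (Λ ^ 2 + lam + 4 * μ * β) := by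
  have hQa := quadratic_eq_zero_of_radicand_eq_zero (hrP.trans hr) hrA hA
  have hQb := quadratic_eq_zero_of_radicand_eq_zero hrP (hr.trans hrA) hP
  set a := √(β ^ 2 - r_A ^ 2) with ha
  set b := √(β ^ 2 - r_P ^ 2) with hb
  have hab : a < b := sqrt_lt_sqrt (by nlinarith) (by nlinarith)
  have hE : 0 < 2 * ξ - 2 * ε := by
    nlinarith [sum_roots_eq hab.ne hQa hQb, sqrt_nonneg (β ^ 2 - r_A ^ 2)]
  have hfactor := quadratic_eq_mul_of_roots hab.ne hQa hQb
  calc 2 * Λ * ∫ r in r_P..r_A, 1 / (r ^ 2 * √(2 * ξ - 2 * (ε + lam / (2 * r ^ 2)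
          + μ / (β + √(β ^ 2 - r ^ 2))) - Λ ^ 2 / r ^ 2))
      = 2 * Λ * ∫ r in r_P..r_A,
          1 / (r * √((2 * ξ - 2 * ε) * ((b - √(β ^ 2 - r ^ 2)) * (√(β ^ 2 - r ^ 2) - a)))) := by
        refine congrArg _ (integral_congr fun r hr' => ?_)
        rw [uIcc_of_le hr.le] at hr'
        have hr₀ := hrP.trans_le hr'.1
        rw [radicand_eq hr₀ (hr'.2.trans_lt hrA), hfactor, one_div_sq_mul_sqrt_div_sq hr₀]
    _ = 2 * Λ * (π / (2 * √(Λ ^ 2 + lam)) - π / (2 * √(Λ ^ 2 + lam + 4 * μ * β))) := by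
        rw [integral_one_div_mul_sqrt_radial hE hrP hr hrA ha.symm hb.symm]
        rw [show (2 * ξ - 2 * ε) * ((β - a) * (β - b)) = Λ ^ 2 + lam by
            linear_combination hfactor β,
          show (2 * ξ - 2 * ε) * ((β + a) * (β + b)) = Λ ^ 2 + lam + 4 * μ * β by
            linear_combination hfactor (-β)]
    _ = π * Λ / √(Λ ^ 2 + lam) - π * Λ / √(Λ ^ 2 + lam + 4 * μ * β) := by ring

/-- In a potential of the Bounded family `ψ(r) = ε + λ/(2r²) + μ/(β + √(β² - r²))`
(defined for `0 < r < β`), the apsidal angle of any bound orbit of angular momentum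
`Λ > 0` (with `Λ² + λ > 0`) equals `πΛ/√(Λ² + λ) - πΛ/√(Λ² + λ + 4μβ)`,
independently of the energy `ξ`. -/
theorem bounded_family_apsidal_angle (μ β ε lam ξ Λ r_P r_A : ℝ)
    (hμ : 0 < μ) (hβ : 0 < β)
    (hΛ : 0 < Λ) (hΛlam : 0 < Λ ^ 2 + lam)
    (hrP : 0 < r_P) (hr : r_P < r_A) (hrA : r_A < β)
    (hpos : ∀ r ∈ Set.Ioo r_P r_A,
      0 < 2 * ξ - 2 * (ε + lam / (2 * r ^ 2) + μ / (β + Real.sqrt (β ^ 2 - r ^ 2)))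
        - Λ ^ 2 / r ^ 2)
    (hP : 2 * ξ - 2 * (ε + lam / (2 * r_P ^ 2)
        + μ / (β + Real.sqrt (β ^ 2 - r_P ^ 2))) - Λ ^ 2 / r_P ^ 2 = 0)
    (hA : 2 * ξ - 2 * (ε + lam / (2 * r_A ^ 2)
        + μ / (β + Real.sqrt (β ^ 2 - r_A ^ 2))) - Λ ^ 2 / r_A ^ 2 = 0) :
    (2 * Λ * ∫ r in r_P..r_A, 1 / (r ^ 2 * Real.sqrt
        (2 * ξ - 2 * (ε + lam / (2 * r ^ 2) + μ / (β + Real.sqrt (β ^ 2 - r ^ 2)))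
          - Λ ^ 2 / r ^ 2))) =
      Real.pi * Λ / Real.sqrt (Λ ^ 2 + lam)
        - Real.pi * Λ / Real.sqrt (Λ ^ 2 + lam + 4 * μ * β) :=
  bounded_family_apsidal_angle_general μ β ε lam ξ Λ r_P r_A hμ hrP hr hrA hP hA
end

section
/- Let r₀ > 0, let ψ : (0, r₀) → ℝ be differentiable, and suppose there is a continuously differentiable function Y : [0, 2r₀²) → ℝ with Y(2r²) = 2r²·ψ(r) for all r ∈ (0, r₀). Then lim_{ε → 0⁺} ε³·ψ′(ε) = −Y(0). Consequently, the mass enclosed near the origin is finite (i.e. ε²ψ′(ε) remains bounded as ε → 0⁺) if and only if Y(0) = 0, i.e. if and only if the curve of the potential in Hénon variables passes through the origin. -/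
/-!
Differentiating the Hénon relation `Y(2ε²) = 2ε²ψ(ε)` gives
`ε²ψ′(ε) = 2ε (Y′(x) − ψ(ε))` with `x = 2ε²`, hence `ε³ψ′(ε) = x Y′(x) − Y(x)`, which tends to
`−Y(0)` because `Y′` has a limit at `0⁺`. So a bounded `ε²ψ′(ε)` forces `Y(0) = 0`; conversely, if
`Y(0) = 0` then `ψ(ε) = Y(x)/x` is a difference quotient of `Y` at `0`, so `Y′(x) − ψ(ε) → 0` and
even `ε²ψ′(ε) → 0`.
-/

open Set Filter Topology

section OneSidedDerivative

variable {Y : ℝ → ℝ} {a b : ℝ}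

theorem ContDiffOn.tendsto_deriv_nhdsGT (hY : ContDiffOn ℝ 1 Y (Ico a b)) (hab : a < b) :
    Tendsto (deriv Y) (𝓝[>] a) (𝓝 (derivWithin Y (Ico a b) a)) := by
  have hcont : ContinuousWithinAt (derivWithin Y (Ico a b)) (Ioo a b) a :=
    ((hY.continuousOn_derivWithin (uniqueDiffOn_Ico a b) le_rfl) a ⟨le_rfl, hab⟩).mono
      Ioo_subset_Ico_self
  rw [ContinuousWithinAt, nhdsWithin_Ioo_eq_nhdsGT hab] at hcont
  refine hcont.congr' ?_
  filter_upwards [Ioo_mem_nhdsGT hab] with x hx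
  exact derivWithin_of_mem_nhds (Ico_mem_nhds hx.1 hx.2)

theorem ContDiffOn.tendsto_slope_nhdsGT (hY : ContDiffOn ℝ 1 Y (Ico a b)) (hab : a < b) :
    Tendsto (slope Y a) (𝓝[>] a) (𝓝 (derivWithin Y (Ico a b) a)) := by
  have hd : HasDerivWithinAt Y (derivWithin Y (Ico a b) a) (Ioo a b) a :=
    ((hY.differentiableOn one_ne_zero) a ⟨le_rfl, hab⟩).hasDerivWithinAt.mono Ioo_subset_Ico_self
  rwa [hasDerivWithinAt_iff_tendsto_slope' (fun h => lt_irrefl a h.1),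
    nhdsWithin_Ioo_eq_nhdsGT hab] at hd

theorem ContDiffOn.tendsto_sub_mul_deriv_sub_nhdsGT (hY : ContDiffOn ℝ 1 Y (Ico a b))
    (hab : a < b) :
    Tendsto (fun x => (x - a) * deriv Y x - Y x) (𝓝[>] a) (𝓝 (-Y a)) := by
  have hsub : Tendsto (fun x => x - a) (𝓝[>] a) (𝓝 0) :=
    tendsto_sub_nhds_zero_iff.2 nhdsWithin_le_nhds
  have hYa : Tendsto Y (𝓝[>] a) (𝓝 (Y a)) := by
    have h := (hY.continuousOn a ⟨le_rfl, hab⟩).mono (Ioo_subset_Ico_self (a := a) (b := b))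
    rwa [ContinuousWithinAt, nhdsWithin_Ioo_eq_nhdsGT hab] at h
  simpa using (hsub.mul (hY.tendsto_deriv_nhdsGT hab)).sub hYa

theorem ContDiffOn.tendsto_deriv_sub_slope_nhdsGT (hY : ContDiffOn ℝ 1 Y (Ico a b))
    (hab : a < b) :
    Tendsto (fun x => deriv Y x - slope Y a x) (𝓝[>] a) (𝓝 0) := by
  simpa using (hY.tendsto_deriv_nhdsGT hab).sub (hY.tendsto_slope_nhdsGT hab)

end OneSidedDerivative

theorem tendsto_two_mul_sq_nhdsGT_zero :
    Tendsto (fun ε : ℝ => 2 * ε ^ 2) (𝓝[>] 0) (𝓝[>] 0) := by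
  refine tendsto_nhdsWithin_iff.2 ⟨?_, ?_⟩
  · have h : Continuous fun ε : ℝ => 2 * ε ^ 2 := by fun_prop
    exact (h.tendsto' 0 0 (by simp)).mono_left nhdsWithin_le_nhds
  · filter_upwards [self_mem_nhdsWithin] with ε (hε : 0 < ε)
    exact mul_pos two_pos (pow_pos hε 2)

theorem sq_mul_deriv_eq_of_comp_two_mul_sq {ψ Y : ℝ → ℝ} {ε : ℝ}
    (hψ : DifferentiableAt ℝ ψ ε) (hY : DifferentiableAt ℝ Y (2 * ε ^ 2))
    (hYψ : (fun t => Y (2 * t ^ 2)) =ᶠ[𝓝 ε] fun t => 2 * t ^ 2 * ψ t) :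
    ε ^ 2 * deriv ψ ε = 2 * ε * (deriv Y (2 * ε ^ 2) - ψ ε) := by
  have hsq : HasDerivAt (fun t : ℝ => 2 * t ^ 2) (4 * ε) ε :=
    ((hasDerivAt_pow 2 ε).const_mul 2).congr_deriv (by norm_num; ring)
  have hchain := (hY.hasDerivAt.comp ε hsq).congr_of_eventuallyEq hYψ.symm
  have h := hchain.unique (hsq.mul hψ.hasDerivAt)
  linear_combination (-1 / 2 : ℝ) * h

theorem eventually_sq_mul_deriv_eq_of_henon {r₀ : ℝ} (hr₀ : 0 < r₀) {ψ Y : ℝ → ℝ}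
    (hψ : ∀ r ∈ Ioo (0 : ℝ) r₀, DifferentiableAt ℝ ψ r)
    (hY : ContDiffOn ℝ 1 Y (Ico 0 (2 * r₀ ^ 2)))
    (hYψ : ∀ r ∈ Ioo (0 : ℝ) r₀, Y (2 * r ^ 2) = 2 * r ^ 2 * ψ r) :
    ∀ᶠ ε in 𝓝[>] (0 : ℝ), ε ^ 2 * deriv ψ ε = 2 * ε * (deriv Y (2 * ε ^ 2) - ψ ε) := by
  filter_upwards [Ioo_mem_nhdsGT hr₀] with ε hε
  have hx : 2 * ε ^ 2 ∈ Ioo 0 (2 * r₀ ^ 2) :=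
    ⟨mul_pos two_pos (pow_pos hε.1 2), by nlinarith [hε.1, hε.2]⟩
  refine sq_mul_deriv_eq_of_comp_two_mul_sq (hψ ε hε) ?_ ?_
  · exact (hY.differentiableOn one_ne_zero _ (Ioo_subset_Ico_self hx)).differentiableAt
      (Ico_mem_nhds hx.1 hx.2)
  · filter_upwards [isOpen_Ioo.mem_nhds hε] with t ht using hYψ t ht

theorem tendsto_cube_mul_deriv_of_henon {r₀ : ℝ} (hr₀ : 0 < r₀) {ψ Y : ℝ → ℝ}
    (hψ : ∀ r ∈ Ioo (0 : ℝ) r₀, DifferentiableAt ℝ ψ r)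
    (hY : ContDiffOn ℝ 1 Y (Ico 0 (2 * r₀ ^ 2)))
    (hYψ : ∀ r ∈ Ioo (0 : ℝ) r₀, Y (2 * r ^ 2) = 2 * r ^ 2 * ψ r) :
    Tendsto (fun ε => ε ^ 3 * deriv ψ ε) (𝓝[>] 0) (𝓝 (-Y 0)) := by
  have hlim := (hY.tendsto_sub_mul_deriv_sub_nhdsGT (by positivity)).comp
    tendsto_two_mul_sq_nhdsGT_zero
  refine hlim.congr' ?_
  filter_upwards [eventually_sq_mul_deriv_eq_of_henon hr₀ hψ hY hYψ, Ioo_mem_nhdsGT hr₀]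
    with ε hε hε₀
  simp only [Function.comp_apply, sub_zero, hYψ ε hε₀]
  linear_combination -ε * hε

theorem tendsto_sq_mul_deriv_of_henon {r₀ : ℝ} (hr₀ : 0 < r₀) {ψ Y : ℝ → ℝ}
    (hψ : ∀ r ∈ Ioo (0 : ℝ) r₀, DifferentiableAt ℝ ψ r)
    (hY : ContDiffOn ℝ 1 Y (Ico 0 (2 * r₀ ^ 2)))
    (hYψ : ∀ r ∈ Ioo (0 : ℝ) r₀, Y (2 * r ^ 2) = 2 * r ^ 2 * ψ r) (hY0 : Y 0 = 0) :
    Tendsto (fun ε => ε ^ 2 * deriv ψ ε) (𝓝[>] 0) (𝓝 0) := by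
  have hlim : Tendsto (fun ε => 2 * ε * (deriv Y (2 * ε ^ 2) - slope Y 0 (2 * ε ^ 2)))
      (𝓝[>] 0) (𝓝 0) := by
    simpa using ((tendsto_id.const_mul 2).mono_left nhdsWithin_le_nhds).mul
      ((hY.tendsto_deriv_sub_slope_nhdsGT (by positivity)).comp tendsto_two_mul_sq_nhdsGT_zero)
  refine hlim.congr' ?_
  filter_upwards [eventually_sq_mul_deriv_eq_of_henon hr₀ hψ hY hYψ, Ioo_mem_nhdsGT hr₀]
    with ε hε hε₀
  rw [hε, slope_def_field, hY0, hYψ ε hε₀]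
  field_simp [hε₀.1.ne']
  ring

/-- If `Y` is a C¹ function on `[0, 2r₀²)` such that `Y(2r²) = 2r²ψ(r)` (Hénon
variables) for a differentiable potential `ψ` on `(0, r₀)`, then
`ε³ψ′(ε) → -Y(0)` as `ε → 0⁺`; consequently `ε²ψ′(ε)` remains bounded as `ε → 0⁺`
(finite central mass) if and only if `Y(0) = 0`, i.e. iff the Hénon curve of the
potential passes through the origin. -/
theorem finite_central_mass_iff
    (r₀ : ℝ) (hr₀ : 0 < r₀) (ψ Y : ℝ → ℝ)
    (hψ : ∀ r ∈ Set.Ioo (0 : ℝ) r₀, DifferentiableAt ℝ ψ r)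
    (hY : ContDiffOn ℝ 1 Y (Set.Ico 0 (2 * r₀ ^ 2)))
    (hYψ : ∀ r ∈ Set.Ioo (0 : ℝ) r₀, Y (2 * r ^ 2) = 2 * r ^ 2 * ψ r) :
    Filter.Tendsto (fun ε => ε ^ 3 * deriv ψ ε)
        (nhdsWithin 0 (Set.Ioi 0)) (nhds (-Y 0)) ∧
      ((∃ M : ℝ, ∀ᶠ ε in nhdsWithin (0 : ℝ) (Set.Ioi 0), |ε ^ 2 * deriv ψ ε| ≤ M)
        ↔ Y 0 = 0) := by
  have hlim := tendsto_cube_mul_deriv_of_henon hr₀ hψ hY hYψ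
  refine ⟨hlim, fun ⟨M, hM⟩ => ?_, fun hY0 => ?_⟩
  · have hbdd : IsBoundedUnder (· ≤ ·) (𝓝[>] (0 : ℝ)) (norm ∘ fun ε => ε ^ 2 * deriv ψ ε) :=
      isBoundedUnder_of_eventually_le hM
    have hzero := (tendsto_id.mono_left nhdsWithin_le_nhds).zero_mul_isBoundedUnder_le hbdd
    exact neg_eq_zero.mp <| tendsto_nhds_unique hlim <| hzero.congr fun ε => by
      simp only [id]; ring
  · have hsq := tendsto_sq_mul_deriv_of_henon hr₀ hψ hY hYψ hY0
    exact ⟨1, ((tendsto_zero_iff_abs_tendsto_zero _).1 hsq).eventually (eventually_le_nhds one_pos)⟩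
end

section
/- Let a, b, c, d ∈ ℝ with δ := ad − bc ≠ 0 and define F : ℝ² → ℝ², F(x, y) := (−cx − dy, ax + by). Then: (i) a point (x, y) ∈ ℝ² satisfies the parabola equation (ax + by)² + cx + dy = 0 if and only if its image (x̄, ȳ) = F(x, y) satisfies the Kepler parabola equation ȳ² = x̄; and (ii) for ξ, Λ ∈ ℝ with c + dξ ≠ 0, if (x, y) satisfies the line equation y = ξx − Λ², then (x̄, ȳ) = F(x, y) satisfies ȳ = ξ̄·x̄ − Λ̄², where ξ̄ := −(a + bξ)/(c + dξ) and Λ̄² := −δΛ²/(c + dξ). -/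
/-- The linear map `F(x,y) = (-cx - dy, ax + by)` used to send an isochrone
parabola through the origin onto the Kepler parabola `ȳ² = x̄`. -/
def henonMap (a b c d : ℝ) : ℝ × ℝ → ℝ × ℝ :=
  fun p => (-c * p.1 - d * p.2, a * p.1 + b * p.2)

/-! On the line `y = ξx - Λ²` the image satisfies `(c + dξ) ȳ = -(a + bξ) x̄ + (ad - bc) Λ²`,
since the terms in `ξ` cancel; dividing by `c + dξ` gives the image line. -/

@[simp]
theorem henonMap_apply (a b c d x y : ℝ) :
    henonMap a b c d (x, y) = (-c * x - d * y, a * x + b * y) :=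
  rfl

theorem sq_henonMap_snd_eq_fst_iff (a b c d x y : ℝ) :
    (henonMap a b c d (x, y)).2 ^ 2 = (henonMap a b c d (x, y)).1 ↔
      (a * x + b * y) ^ 2 + c * x + d * y = 0 := by
  rw [henonMap_apply]
  constructor <;> intro h <;> linarith

theorem henonMap_line_relation (a b c d ξ Λ x : ℝ) :
    (c + d * ξ) * (henonMap a b c d (x, ξ * x - Λ ^ 2)).2 =
      -(a + b * ξ) * (henonMap a b c d (x, ξ * x - Λ ^ 2)).1 + (a * d - b * c) * Λ ^ 2 := by
  rw [henonMap_apply]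
  ring

theorem eq_slope_mul_sub_of_mul_eq {k m e X Y : ℝ} (hk : k ≠ 0) (h : k * Y = -m * X + e) :
    Y = -m / k * X - -e / k := by
  field_simp
  linarith

theorem henonMap_parabola_and_line_general (a b c d : ℝ) :
    (∀ x y : ℝ,
      (a * x + b * y) ^ 2 + c * x + d * y = 0 ↔
        (henonMap a b c d (x, y)).2 ^ 2 = (henonMap a b c d (x, y)).1) ∧
    (∀ ξ Λ x y : ℝ, c + d * ξ ≠ 0 → y = ξ * x - Λ ^ 2 →
      (henonMap a b c d (x, y)).2 =
        (-(a + b * ξ) / (c + d * ξ)) * (henonMap a b c d (x, y)).1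
          - (-((a * d - b * c) * Λ ^ 2) / (c + d * ξ))) := by
  refine ⟨fun x y => (sq_henonMap_snd_eq_fst_iff a b c d x y).symm, ?_⟩
  rintro ξ Λ x y hξ rfl
  exact eq_slope_mul_sub_of_mul_eq hξ (henonMap_line_relation a b c d ξ Λ x)

/-- (i) A point lies on the parabola `(ax+by)² + cx + dy = 0` iff its image under
`F` lies on the Kepler parabola `ȳ² = x̄`; (ii) `F` maps the line `y = ξx - Λ²`
(with `c + dξ ≠ 0`) onto the line `ȳ = ξ̄x̄ - Λ̄²`, where
`ξ̄ = -(a + bξ)/(c + dξ)` and `Λ̄² = -δΛ²/(c + dξ)`, `δ = ad - bc`. -/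
theorem henonMap_parabola_and_line (a b c d : ℝ) (hδ : a * d - b * c ≠ 0) :
    (∀ x y : ℝ,
      (a * x + b * y) ^ 2 + c * x + d * y = 0 ↔
        (henonMap a b c d (x, y)).2 ^ 2 = (henonMap a b c d (x, y)).1) ∧
    (∀ ξ Λ x y : ℝ, c + d * ξ ≠ 0 → y = ξ * x - Λ ^ 2 →
      (henonMap a b c d (x, y)).2 =
        (-(a + b * ξ) / (c + d * ξ)) * (henonMap a b c d (x, y)).1
          - (-((a * d - b * c) * Λ ^ 2) / (c + d * ξ))) :=
  henonMap_parabola_and_line_general a b c d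
end

section
/- Let μ > 0, β > 0 and λ < 0, and define f(Λ) := Λ/√(Λ² + λ) − Λ/√(Λ² + λ + 4μβ) for Λ > √(−λ). Then f is strictly decreasing on (√(−λ), ∞); moreover f(Λ) → +∞ as Λ → √(−λ)⁺ and f(Λ) → 0 as Λ → +∞. -/
/-!
The derivative of `g a x = x / √(x² + a)` is `a / (x² + a)^(3/2)`, so `f = g λ - g (λ + c)`
(`c = 4μβ > 0`) has derivative `λ / (x² + λ)^(3/2) - (λ + c) / (x² + λ + c)^(3/2)`. This is
negative: the first term is negative, and if `λ + c < 0` the second has a smaller numerator in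
absolute value and a larger denominator. As `x → √(-λ)⁺` the denominator of `g λ` tends to `0⁺`
while `g (λ + c)` stays continuous, and at infinity both terms tend to `1`.
-/

open Filter Set Topology

lemma sq_add_pos_of_sqrt_neg_lt {a x : ℝ} (hx : √(-a) < x) : 0 < x ^ 2 + a := by
  have := (Real.sqrt_lt' ((Real.sqrt_nonneg _).trans_lt hx)).1 hx
  linarith

lemma hasDerivAt_div_sqrt_sq_add {a x : ℝ} (hx : 0 < x ^ 2 + a) :
    HasDerivAt (fun y => y / √(y ^ 2 + a)) (a / √(x ^ 2 + a) ^ 3) x := by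
  have hs : 0 < √(x ^ 2 + a) := Real.sqrt_pos.2 hx
  have hsq : HasDerivAt (fun y : ℝ => y ^ 2 + a) (2 * x) x := by
    simpa using (hasDerivAt_pow 2 x).add_const a
  refine ((hasDerivAt_id' x).fun_div (hsq.sqrt hx.ne') hs.ne').congr_deriv ?_
  field_simp
  linear_combination Real.sq_sqrt hx.le

lemma div_sqrt_add_pow_three_lt {a b t : ℝ} (ha : a < 0) (hab : a < b) (ht : 0 < t + a) :
    a / √(t + a) ^ 3 < b / √(t + b) ^ 3 := by
  have hA : 0 < √(t + a) ^ 3 := pow_pos (Real.sqrt_pos.2 ht) 3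
  have hB : 0 < √(t + b) ^ 3 := pow_pos (Real.sqrt_pos.2 (by linarith)) 3
  rcases le_or_gt 0 b with hb | hb
  · exact (div_neg_of_neg_of_pos ha hA).trans_le (div_nonneg hb hB.le)
  · have hAB : √(t + a) ^ 3 < √(t + b) ^ 3 := by gcongr
    calc a / √(t + a) ^ 3 < a / √(t + b) ^ 3 := by
          simpa only [neg_div, neg_lt_neg_iff] using div_lt_div_of_pos_left (neg_pos.2 ha) hA hAB
      _ < b / √(t + b) ^ 3 := div_lt_div_of_pos_right hab hB

lemma strictAntiOn_div_sqrt_sq_add_sub {a c : ℝ} (ha : a < 0) (hc : 0 < c) :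
    StrictAntiOn (fun x => x / √(x ^ 2 + a) - x / √(x ^ 2 + a + c)) (Ioi √(-a)) := by
  have hderiv : ∀ x ∈ Ioi √(-a), HasDerivAt (fun x => x / √(x ^ 2 + a) - x / √(x ^ 2 + a + c))
      (a / √(x ^ 2 + a) ^ 3 - (a + c) / √(x ^ 2 + a + c) ^ 3) x := fun x hx => by
    have hxa := sq_add_pos_of_sqrt_neg_lt hx
    simpa only [← add_assoc] using (hasDerivAt_div_sqrt_sq_add hxa).fun_sub
      (hasDerivAt_div_sqrt_sq_add (a := a + c) (by linarith))
  refine strictAntiOn_of_hasDerivWithinAt_neg (convex_Ioi _)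
    (f' := fun x => a / √(x ^ 2 + a) ^ 3 - (a + c) / √(x ^ 2 + a + c) ^ 3)
    (fun x hx => (hderiv x hx).continuousAt.continuousWithinAt) ?_ ?_
  · rw [interior_Ioi]
    exact fun x hx => (hderiv x hx).hasDerivWithinAt
  · rw [interior_Ioi]
    intro x hx
    simpa only [sub_neg, ← add_assoc] using
      div_sqrt_add_pow_three_lt ha (lt_add_of_pos_right a hc) (sq_add_pos_of_sqrt_neg_lt hx)

lemma tendsto_div_sqrt_sq_add_atTop (a : ℝ) :
    Tendsto (fun x => x / √(x ^ 2 + a)) atTop (𝓝 1) := by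
  have hden : Tendsto (fun x : ℝ => x ^ 2 + a) atTop atTop :=
    tendsto_atTop_add_const_right _ a (tendsto_pow_atTop two_ne_zero)
  have hlim : Tendsto (fun x : ℝ => √(1 - a / (x ^ 2 + a))) atTop (𝓝 1) := by
    simpa using ((tendsto_const_nhds.div_atTop hden).const_sub 1).sqrt
  refine hlim.congr' ?_
  -- for `x ≥ 0`: `1 - a / (x² + a) = x² / (x² + a)`, whose square root is `x / √(x² + a)`
  filter_upwards [eventually_ge_atTop 0, hden.eventually_gt_atTop 0] with x hx hxa
  rw [one_sub_div hxa.ne', add_sub_cancel_right, Real.sqrt_div' _ hxa.le, Real.sqrt_sq hx]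

lemma tendsto_div_sqrt_sq_add_nhdsGT {a : ℝ} (ha : a < 0) :
    Tendsto (fun x => x / √(x ^ 2 + a)) (𝓝[>] √(-a)) atTop := by
  have hnum : Tendsto (fun x : ℝ => x) (𝓝[>] √(-a)) (𝓝 √(-a)) :=
    tendsto_id.mono_left nhdsWithin_le_nhds
  have hden : Tendsto (fun x => √(x ^ 2 + a)) (𝓝[>] √(-a)) (𝓝[>] 0) := by
    refine tendsto_nhdsWithin_iff.2 ⟨?_, ?_⟩
    · have : Continuous fun x : ℝ => √(x ^ 2 + a) := by fun_prop
      simpa [Real.sq_sqrt (neg_nonneg.2 ha.le)] using this.continuousAt.tendsto.mono_left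
        (nhdsWithin_le_nhds (a := √(-a)))
    · filter_upwards [self_mem_nhdsWithin] with x hx
      exact Real.sqrt_pos.2 (sq_add_pos_of_sqrt_neg_lt hx)
  exact hnum.pos_mul_atTop (Real.sqrt_pos.2 (neg_pos.2 ha)) hden.inv_tendsto_nhdsGT_zero

lemma tendsto_div_sqrt_sq_add_sub_nhdsGT {a c : ℝ} (ha : a < 0) (hc : 0 < c) :
    Tendsto (fun x => x / √(x ^ 2 + a) - x / √(x ^ 2 + a + c)) (𝓝[>] √(-a)) atTop := by
  have hpos : 0 < √(-a) ^ 2 + a + c := by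
    rw [Real.sq_sqrt (neg_nonneg.2 ha.le)]; linarith
  have hcont : ContinuousAt (fun x => x / √(x ^ 2 + a + c)) √(-a) :=
    continuousAt_id.div (by fun_prop) (Real.sqrt_pos.2 hpos).ne'
  exact (tendsto_div_sqrt_sq_add_nhdsGT ha).atTop_add
    (hcont.tendsto.mono_left nhdsWithin_le_nhds).neg

lemma tendsto_div_sqrt_sq_add_sub_atTop (a c : ℝ) :
    Tendsto (fun x => x / √(x ^ 2 + a) - x / √(x ^ 2 + a + c)) atTop (𝓝 0) := by
  simpa only [← add_assoc, sub_self] using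
    (tendsto_div_sqrt_sq_add_atTop a).sub (tendsto_div_sqrt_sq_add_atTop (a + c))

/-- For the Bounded family with `λ < 0`, the function
`f(Λ) = Λ/√(Λ² + λ) - Λ/√(Λ² + λ + 4μβ)` is strictly decreasing on `(√(-λ), ∞)`,
tends to `+∞` as `Λ → √(-λ)⁺`, and tends to `0` as `Λ → +∞`. -/
theorem bounded_apsidal_strictAnti (μ β lam : ℝ)
    (hμ : 0 < μ) (hβ : 0 < β) (hlam : lam < 0) :
    let f : ℝ → ℝ := fun Λ =>
      Λ / Real.sqrt (Λ ^ 2 + lam) - Λ / Real.sqrt (Λ ^ 2 + lam + 4 * μ * β)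
    StrictAntiOn f (Set.Ioi (Real.sqrt (-lam))) ∧
      Filter.Tendsto f
        (nhdsWithin (Real.sqrt (-lam)) (Set.Ioi (Real.sqrt (-lam)))) Filter.atTop ∧
      Filter.Tendsto f Filter.atTop (nhds 0) := by
  have hc : 0 < 4 * μ * β := by positivity
  exact ⟨strictAntiOn_div_sqrt_sq_add_sub hlam hc, tendsto_div_sqrt_sq_add_sub_nhdsGT hlam hc,
    tendsto_div_sqrt_sq_add_sub_atTop lam (4 * μ * β)⟩
end
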